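/- arXiv:2106.12661 — 5 statements merged into one kernel-verified Lean document; each statement's English description precedes it below -/
import Mathlib

section
/- Let H be a real separable Hilbert space. There exist absolute constants c_0, ρ ∈ (0,1) such that the following holds. Let E ⊆ H and, for each k ∈ ℤ, let X_k be a maximal ρ^k-separated subset of E. Then for each k ∈ ℤ there is a collection 𝒟_k of subsets of E ('cubes') such that, writing 𝒟 = ⋃_{k∈ℤ} 𝒟_k and ℓ(Q) = 5ρ^k for Q ∈ 𝒟_k: (1) if Q_1, Q_2 ∈ 𝒟 and Q_1 ∩ Q_2 ≠ ∅, then Q_1 ⊆ Q_2 or Q_2 ⊆ Q_1; (2) for each Q ∈ 𝒟_k there is a point x_Q ∈ X_k with E ∩ B(x_Q, c_0 ℓ(Q)) ⊆ Q ⊆ B(x_Q, ℓ(Q)); (3) for each k ∈ ℤ, E ⊆ ⋃_{Q∈𝒟_k} B(x_Q, ℓ(Q)). -/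
open Metric Set MeasureTheory
open scoped ENNReal NNReal Classical

noncomputable section

variable {H : Type*} [NormedAddCommGroup H] [InnerProductSpace ℝ H]

/-- A `d`-plane: a `d`-dimensional affine subspace of `H`. -/
def IsDPlane (d : ℕ) (P : Set H) : Prop :=
  ∃ (x : H) (W : Submodule ℝ H), Module.finrank ℝ W = d ∧ P = (fun w => x + w) '' (W : Set H)

/-- `d`-dimensional Hausdorff content `𝓗^d_∞`. -/
def hContent (d : ℕ) (A : Set H) : ℝ≥0∞ :=
  ⨅ (t : ℕ → Set H) (_ : A ⊆ ⋃ n, t n), ∑' n, EMetric.diam (t n) ^ (d : ℝ)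

/-- Normalized local Hausdorff distance between `E` and `F` relative to the ball `B(x,r)`. -/
def dBall (x : H) (r : ℝ) (E F : Set H) : ℝ :=
  r⁻¹ * max (⨆ y ∈ E ∩ closedBall x r, infDist y F) (⨆ y ∈ F ∩ closedBall x r, infDist y E)

/-- `β_E^{d,p}(B(x,r), P)`. -/
def betaPl (d : ℕ) (p : ℝ) (E : Set H) (x : H) (r : ℝ) (P : Set H) : ℝ≥0∞ :=
  ((ENNReal.ofReal r ^ d)⁻¹ *
      ∫⁻ t in Ioo (0 : ℝ) 1,
        hContent d {y | y ∈ E ∩ closedBall x r ∧ t * r < infDist y P} *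
          ENNReal.ofReal (t ^ (p - 1))) ^ (1 / p)

/-- `β_E^{d,p}(B(x,r))`: infimum of `β_E^{d,p}(B(x,r), P)` over all `d`-planes `P`. -/
def betaInf (d : ℕ) (p : ℝ) (E : Set H) (x : H) (r : ℝ) : ℝ≥0∞ :=
  ⨅ (P : Set H) (_ : IsDPlane d P), betaPl d p E x r P

/-- Choquet integral of `f` over `A` against the Hausdorff content `𝓗^d_∞`. -/
def choquet (d : ℕ) (A : Set H) (f : H → ℝ) : ℝ≥0∞ :=
  ∫⁻ t in Ioi (0 : ℝ), hContent d {x | x ∈ A ∧ t < f x}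

/-- Choquet integral of `f^p` over `A` against the Hausdorff content `𝓗^d_∞`. -/
def choquetPow (d : ℕ) (p : ℝ) (A : Set H) (f : H → ℝ) : ℝ≥0∞ :=
  ∫⁻ t in Ioi (0 : ℝ), hContent d {x | x ∈ A ∧ t < f x} * ENNReal.ofReal (t ^ (p - 1))

/-- A Christ–David cube system for `E ⊆ H`, with parameters `c₀, ρ ∈ (0,1)`. A cube
`Q ∈ cubes k` has side length `ℓ(Q) = 5ρᵏ` and centre `center k Q`. -/
structure ChristDavid (E : Set H) where
  c₀ : ℝ
  ρ : ℝ
  c₀_pos : 0 < c₀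
  c₀_lt_one : c₀ < 1
  ρ_pos : 0 < ρ
  ρ_lt_one : ρ < 1
  cubes : ℤ → Set (Set H)
  center : ℤ → Set H → H
  subset_E : ∀ k Q, Q ∈ cubes k → Q ⊆ E
  nested : ∀ k l Q R, Q ∈ cubes k → R ∈ cubes l → (Q ∩ R).Nonempty → Q ⊆ R ∨ R ⊆ Q
  center_mem : ∀ k Q, Q ∈ cubes k → center k Q ∈ E
  ball_subset : ∀ k Q, Q ∈ cubes k →
    E ∩ closedBall (center k Q) (c₀ * (5 * ρ ^ k)) ⊆ Q
  subset_ball : ∀ k Q, Q ∈ cubes k → Q ⊆ closedBall (center k Q) (5 * ρ ^ k)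
  covers : ∀ k, E ⊆ ⋃ Q ∈ cubes k, closedBall (center k Q) (5 * ρ ^ k)

namespace ChristDavid

variable {E : Set H}

/-- Sum of a quantity over all cubes of a Christ–David cube system. -/
def sumCubes (D : ChristDavid E) (F : ℤ → Set H → ℝ≥0∞) : ℝ≥0∞ :=
  ∑' (k : ℤ), ∑' (Q : D.cubes k), F k (Q : Set H)

/-- `Q ∈ BWGL(A, ε)`: the set `E` is `ε`-far from every `d`-plane in `A B_Q`. -/
def inBWGL (D : ChristDavid E) (d : ℕ) (A ε : ℝ) (k : ℤ) (Q : Set H) : Prop :=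
  ∀ P : Set H, IsDPlane d P → ε ≤ dBall (D.center k Q) (A * (5 * D.ρ ^ k)) E P

/-- `BWGL(Q₀, A, ε) = Σ { ℓ(R)^d : R ⊆ Q₀, R ∈ BWGL(A,ε) }`. -/
def bwglSum (D : ChristDavid E) (d : ℕ) (A ε : ℝ) (Q₀ : Set H) : ℝ≥0∞ :=
  D.sumCubes fun k Q =>
    if Q ⊆ Q₀ ∧ D.inBWGL d A ε k Q then ENNReal.ofReal (5 * D.ρ ^ k) ^ d else 0

/-- `Σ_{Q ⊆ Q₀} β_E^{d,p}(C₀ B_Q)² ℓ(Q)^d`. -/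
def betaSum (D : ChristDavid E) (d : ℕ) (p C₀ : ℝ) (Q₀ : Set H) : ℝ≥0∞ :=
  D.sumCubes fun k Q =>
    if Q ⊆ Q₀ then
      betaInf d p E (D.center k Q) (C₀ * (5 * D.ρ ^ k)) ^ 2 *
        ENNReal.ofReal (5 * D.ρ ^ k) ^ d
    else 0

/-- `E` satisfies the bilateral weak geometric lemma. -/
def SatisfiesBWGL (D : ChristDavid E) (d : ℕ) : Prop :=
  ∀ A ε : ℝ, 1 ≤ A → 0 < ε → ∃ C : ℝ, 0 < C ∧
    ∀ (k₀ : ℤ), ∀ Q₀ ∈ D.cubes k₀,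
      D.bwglSum d A ε Q₀ ≤ ENNReal.ofReal C * ENNReal.ofReal (5 * D.ρ ^ k₀) ^ d

end ChristDavid

/-- Lower content `d`-regularity with constant `c`. -/
def LowerContentRegular (d : ℕ) (c : ℝ) (E : Set H) : Prop :=
  ∀ x ∈ E, ∀ r : ℝ, 0 < r → ENNReal.ofReal r < EMetric.diam E →
    ENNReal.ofReal (c * r ^ d) ≤ hContent d (E ∩ closedBall x r)

/-- Ahlfors `d`-regularity with constant `A₀`. -/
def AhlforsRegular [MeasurableSpace H] [BorelSpace H] (d : ℕ) (A₀ : ℝ) (E : Set H) : Prop :=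
  ∀ x ∈ E, ∀ r : ℝ, 0 < r → ENNReal.ofReal r < EMetric.diam E →
    ENNReal.ofReal (r ^ d / A₀) ≤ μH[(d : ℝ)] (E ∩ closedBall x r) ∧
      μH[(d : ℝ)] (E ∩ closedBall x r) ≤ ENNReal.ofReal (A₀ * r ^ d)

/-- Uniform `d`-rectifiability: Ahlfors `d`-regularity together with big pieces of
Lipschitz images of `ℝ^d`. -/
def UniformlyRectifiable [MeasurableSpace H] [BorelSpace H] (d : ℕ) (E : Set H) : Prop :=
  (∃ A₀ : ℝ, 1 ≤ A₀ ∧ AhlforsRegular d A₀ E) ∧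
    ∃ L θ : ℝ, 0 < L ∧ 0 < θ ∧
      ∀ x ∈ E, ∀ r : ℝ, 0 < r → ENNReal.ofReal r < EMetric.diam E →
        ∃ f : EuclideanSpace ℝ (Fin d) → H,
          LipschitzWith (Real.toNNReal L) f ∧
            ENNReal.ofReal (θ * r ^ d) ≤
              μH[(d : ℝ)] (E ∩ closedBall x r ∩ f '' closedBall 0 r)

/-- `(ε, d, δ₀)`-Reifenberg flatness. -/
def ReifenbergFlat (ε : ℝ) (d : ℕ) (δ₀ : ℝ) (E : Set H) : Prop :=
  ∀ x ∈ E, ∀ r : ℝ, 0 < r → r < δ₀ →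
    ∃ P : Set H, IsDPlane d P ∧ dBall x r E P ≤ ε

end

open Metric Set
open scoped Classical

namespace CDConstruction

variable {H : Type*} [MetricSpace H]

/-- A chosen net point of `X k` within `(1/10)^k` of `y` (junk value `y` otherwise). -/
noncomputable def Vpt (X : ℤ → Set H) (k : ℤ) (y : H) : H :=
  if h : ∃ x, x ∈ X k ∧ dist y x ≤ (1/10 : ℝ) ^ k then h.choose else y

/-- Parent map: snaps to the (unique) net point of `X k` at distance `≤ (2/5)(1/10)^k`
if one exists, otherwise any net point within `(1/10)^k`. -/
noncomputable def par (X : ℤ → Set H) (k : ℤ) (z : H) : H :=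
  if h : ∃ x, x ∈ X k ∧ dist z x ≤ (2/5) * (1/10 : ℝ) ^ k then h.choose
  else if h' : ∃ x, x ∈ X k ∧ dist z x ≤ (1/10 : ℝ) ^ k then h'.choose else z

/-- `anc X n k z` : the level-`k` ancestor of a point `z` of level `k + n`. -/
noncomputable def anc (X : ℤ → Set H) : ℕ → ℤ → H → H
  | 0, _, z => z
  | n+1, k, z => par X k (anc X n (k+1) z)

/-- The cube of centre `x ∈ X k`: points of `E` whose fine-scale net points eventually
have level-`k` ancestor `x`. -/
def cube (E : Set H) (X : ℤ → Set H) (k : ℤ) (x : H) : Set H :=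
  { y | y ∈ E ∧ ∃ N : ℕ, ∀ n : ℕ, N ≤ n → anc X n k (Vpt X (k + (n : ℤ)) y) = x }

variable {E : Set H} {X : ℤ → Set H}

lemma rpos (k : ℤ) : (0:ℝ) < (1/10 : ℝ) ^ k := zpow_pos (by norm_num) k

lemma rsucc (k : ℤ) : (1/10 : ℝ) ^ (k+1) = (1/10 : ℝ) ^ k * (1/10) :=
  zpow_add_one₀ (by norm_num) k

lemma rmono (k : ℤ) (n : ℕ) : (1/10 : ℝ) ^ (k + (n:ℤ)) ≤ (1/10 : ℝ) ^ k := by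
  rw [zpow_add₀ (by norm_num : (1/10:ℝ) ≠ 0), zpow_natCast]
  have h1 : (1/10 : ℝ) ^ n ≤ 1 := pow_le_one₀ (by norm_num) (by norm_num)
  nlinarith [rpos k, pow_pos (show (0:ℝ) < 1/10 by norm_num) n]

lemma Vpt_spec (hcov : ∀ k, ∀ y ∈ E, ∃ x ∈ X k, dist y x ≤ (1/10:ℝ) ^ k)
    {k : ℤ} {y : H} (hy : y ∈ E) :
    Vpt X k y ∈ X k ∧ dist y (Vpt X k y) ≤ (1/10:ℝ) ^ k := by
  have h : ∃ x, x ∈ X k ∧ dist y x ≤ (1/10 : ℝ) ^ k := hcov k y hy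
  rw [Vpt, dif_pos h]
  exact h.choose_spec

lemma par_spec (hcov : ∀ k, ∀ y ∈ E, ∃ x ∈ X k, dist y x ≤ (1/10:ℝ) ^ k)
    (k : ℤ) {z : H} (hz : z ∈ E) :
    par X k z ∈ X k ∧ dist z (par X k z) ≤ (1/10:ℝ) ^ k := by
  rw [par]
  split_ifs with h h'
  · refine ⟨h.choose_spec.1, h.choose_spec.2.trans ?_⟩
    nlinarith [rpos k]
  · exact h'.choose_spec
  · exact absurd (hcov k z hz) h'

lemma par_eq (hsep : ∀ k, ∀ x ∈ X k, ∀ y ∈ X k, x ≠ y → (1/10:ℝ) ^ k ≤ dist x y)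
    {k : ℤ} {x z : H} (hx : x ∈ X k) (hd : dist z x ≤ (2/5) * (1/10:ℝ) ^ k) :
    par X k z = x := by
  have h : ∃ x', x' ∈ X k ∧ dist z x' ≤ (2/5) * (1/10 : ℝ) ^ k := ⟨x, hx, hd⟩
  rw [par, dif_pos h]
  by_contra hne
  have hsep' := hsep k _ h.choose_spec.1 _ hx hne
  have ht : dist h.choose x ≤ dist h.choose z + dist z x := dist_triangle _ _ _
  rw [dist_comm h.choose z] at ht
  have := h.choose_spec.2
  nlinarith [rpos k]

lemma anc_spec (hXE : ∀ k, X k ⊆ E)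
    (hcov : ∀ k, ∀ y ∈ E, ∃ x ∈ X k, dist y x ≤ (1/10:ℝ) ^ k) :
    ∀ (n : ℕ) (k : ℤ) (z : H), z ∈ X (k + (n:ℤ)) →
      anc X n k z ∈ X k ∧
        dist z (anc X n k z) ≤ (10/9) * ((1/10:ℝ) ^ k - (1/10:ℝ) ^ (k + (n:ℤ))) := by
  intro n
  induction n with
  | zero =>
    intro k z hz
    simp only [Nat.cast_zero, add_zero] at hz ⊢
    exact ⟨hz, by simp [anc]⟩
  | succ m ih =>
    intro k z hz
    have e : k + ((m+1 : ℕ) : ℤ) = (k+1) + (m : ℤ) := by push_cast; ring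
    have hz' : z ∈ X ((k+1) + (m:ℤ)) := by rw [← e]; exact hz
    obtain ⟨hw, hdw⟩ := ih (k+1) z hz'
    have hwE : anc X m (k+1) z ∈ E := hXE _ hw
    obtain ⟨hp, hdp⟩ := par_spec hcov k hwE
    refine ⟨hp, ?_⟩
    have ht : dist z (anc X (m+1) k z) ≤
        dist z (anc X m (k+1) z) + dist (anc X m (k+1) z) (par X k (anc X m (k+1) z)) := by
      exact dist_triangle _ _ _
    have e2 : (1/10:ℝ) ^ ((k+1) + (m:ℤ)) = (1/10:ℝ) ^ (k + ((m+1:ℕ):ℤ)) := by rw [← e]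
    rw [e2] at hdw
    have hb := rsucc k
    linarith

lemma anc_succ (m : ℕ) (k : ℤ) (z : H) :
    anc X (m+1) k z = par X k (anc X m (k+1) z) := rfl

lemma cube_core (hXE : ∀ k, X k ⊆ E)
    (hsep : ∀ k, ∀ x ∈ X k, ∀ y ∈ X k, x ≠ y → (1/10:ℝ) ^ k ≤ dist x y)
    (hcov : ∀ k, ∀ y ∈ E, ∃ x ∈ X k, dist y x ≤ (1/10:ℝ) ^ k)
    {k : ℤ} {x y : H} (hx : x ∈ X k) (hy : y ∈ E)
    (hd : dist y x ≤ (1/4) * (1/10:ℝ) ^ k) :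
    y ∈ cube E X k x := by
  refine ⟨hy, 1, ?_⟩
  intro n hn
  obtain ⟨m, rfl⟩ : ∃ m, n = m + 1 := ⟨n - 1, by omega⟩
  have e : k + ((m+1 : ℕ) : ℤ) = (k+1) + (m : ℤ) := by push_cast; ring
  set v := Vpt X (k + ((m+1:ℕ):ℤ)) y with hv
  obtain ⟨hvX, hvd⟩ := Vpt_spec hcov (k := k + ((m+1:ℕ):ℤ)) hy
  rw [← hv] at hvX hvd
  have hvX' : v ∈ X ((k+1) + (m:ℤ)) := by rw [← e]; exact hvX
  obtain ⟨hwX, hwd⟩ := anc_spec hXE hcov m (k+1) v hvX'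
  rw [anc_succ]
  apply par_eq hsep hx
  have ht : dist (anc X m (k+1) v) x ≤
      dist (anc X m (k+1) v) v + dist v y + dist y x := dist_triangle4 _ _ _ _
  rw [dist_comm (anc X m (k+1) v) v, dist_comm v y] at ht
  have e2 : (1/10:ℝ) ^ (k + ((m+1:ℕ):ℤ)) = (1/10:ℝ) ^ ((k+1) + (m:ℤ)) := by rw [e]
  rw [e2] at hvd
  have hb := rsucc k
  have hc := (rpos ((k+1) + (m:ℤ))).le
  have ha := (rpos k).le
  linarith

lemma cube_subset_ball (hXE : ∀ k, X k ⊆ E)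
    (hcov : ∀ k, ∀ y ∈ E, ∃ x ∈ X k, dist y x ≤ (1/10:ℝ) ^ k)
    {k : ℤ} {x y : H} (hy : y ∈ cube E X k x) :
    dist y x ≤ (10/9) * (1/10:ℝ) ^ k := by
  obtain ⟨hyE, N, hN⟩ := hy
  obtain ⟨hvX, hvd⟩ := Vpt_spec hcov (k := k + (N:ℤ)) hyE
  obtain ⟨hwX, hwd⟩ := anc_spec hXE hcov N k _ hvX
  rw [hN N le_rfl] at hwd
  have ht : dist y x ≤ dist y (Vpt X (k + (N:ℤ)) y) + dist (Vpt X (k + (N:ℤ)) y) x :=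
    dist_triangle _ _ _
  have hc := (rpos (k + (N:ℤ))).le
  linarith

lemma cube_unique {k : ℤ} {x x' y : H}
    (hy : y ∈ cube E X k x) (hy' : y ∈ cube E X k x') : x = x' := by
  obtain ⟨-, N, hN⟩ := hy
  obtain ⟨-, N', hN'⟩ := hy'
  rw [← hN (max N N') (le_max_left _ _), hN' (max N N') (le_max_right _ _)]

lemma cube_step (k : ℤ) (z : H) : cube E X (k+1) z ⊆ cube E X k (par X k z) := by
  rintro y ⟨hy, N, hN⟩
  refine ⟨hy, N+1, ?_⟩
  intro n hn
  obtain ⟨m, rfl⟩ : ∃ m, n = m + 1 := ⟨n - 1, by omega⟩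
  have hm : N ≤ m := by omega
  have e : k + ((m+1 : ℕ) : ℤ) = (k+1) + (m : ℤ) := by push_cast; ring
  rw [anc_succ, e, hN m hm]

lemma cube_nest : ∀ (n : ℕ) (k : ℤ) (x : H),
    cube E X (k + (n:ℤ)) x ⊆ cube E X k (anc X n k x) := by
  intro n
  induction n with
  | zero => intro k x; simp [anc]
  | succ m ih =>
    intro k x
    have e : k + ((m+1 : ℕ) : ℤ) = (k+1) + (m : ℤ) := by push_cast; ring
    rw [anc_succ, e]
    exact (ih (k+1) x).trans (cube_step k _)

end CDConstruction

/-- **Christ–David cubes in Hilbert space.** There are absolute constants `c₀, ρ ∈ (0,1)` so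
that for any `E ⊆ H` and any sequence of maximal `ρᵏ`-separated nets `Xₖ ⊆ E`, there is a
system of "cubes" `𝒟ₖ` (subsets of `E`) with centres `ctr k Q ∈ Xₖ` satisfying the nesting
property, the containment `E ∩ B(x_Q, c₀ℓ(Q)) ⊆ Q ⊆ B(x_Q, ℓ(Q))` with `ℓ(Q) = 5ρᵏ`, and
the covering property `E ⊆ ⋃_{Q ∈ 𝒟ₖ} B(x_Q, ℓ(Q))`. -/
theorem christ_david_cube_construction
    (H : Type*) [NormedAddCommGroup H] [InnerProductSpace ℝ H]
    [CompleteSpace H] [TopologicalSpace.SeparableSpace H] :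
    ∃ c₀ ρ : ℝ, c₀ ∈ Set.Ioo (0 : ℝ) 1 ∧ ρ ∈ Set.Ioo (0 : ℝ) 1 ∧
      ∀ (E : Set H) (X : ℤ → Set H),
        (∀ k, X k ⊆ E) →
        (∀ k, ∀ x ∈ X k, ∀ y ∈ X k, x ≠ y → ρ ^ k ≤ dist x y) →
        (∀ k, ∀ y ∈ E, ∃ x ∈ X k, dist y x ≤ ρ ^ k) →
        ∃ (𝒟 : ℤ → Set (Set H)) (ctr : ℤ → Set H → H),
          (∀ k, ∀ Q ∈ 𝒟 k, Q ⊆ E) ∧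
          (∀ k l, ∀ Q ∈ 𝒟 k, ∀ R ∈ 𝒟 l, (Q ∩ R).Nonempty → Q ⊆ R ∨ R ⊆ Q) ∧
          (∀ k, ∀ Q ∈ 𝒟 k, ctr k Q ∈ X k ∧
            E ∩ closedBall (ctr k Q) (c₀ * (5 * ρ ^ k)) ⊆ Q ∧
            Q ⊆ closedBall (ctr k Q) (5 * ρ ^ k)) ∧
          (∀ k, E ⊆ ⋃ Q ∈ 𝒟 k, closedBall (ctr k Q) (5 * ρ ^ k)) := by
  
  classical
  refine ⟨1/20, 1/10, ⟨by norm_num, by norm_num⟩, ⟨by norm_num, by norm_num⟩, ?_⟩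
  intro E X hXE hsep hcov
  set D : ℤ → Set (Set H) := fun k => (CDConstruction.cube E X k) '' (X k) with hD
  set ctr : ℤ → Set H → H := fun k Q =>
    if h : ∃ x, x ∈ X k ∧ Q = CDConstruction.cube E X k x then h.choose else 0 with hctr
  have key : ∀ (k : ℤ) (Q : Set H), (∃ x, x ∈ X k ∧ Q = CDConstruction.cube E X k x) →
      ctr k Q ∈ X k ∧ Q = CDConstruction.cube E X k (ctr k Q) := by
    intro k Q h
    have hc : ctr k Q = h.choose := by simp only [hctr]; rw [dif_pos h]
    rw [hc]
    exact ⟨h.choose_spec.1, h.choose_spec.2⟩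
  have nest : ∀ (k l : ℤ) (x w : H), l ≤ k → x ∈ X k → w ∈ X l →
      (CDConstruction.cube E X k x ∩ CDConstruction.cube E X l w).Nonempty →
      CDConstruction.cube E X k x ⊆ CDConstruction.cube E X l w := by
    intro k l x w hlk hx hw hne
    obtain ⟨y, hy1, hy2⟩ := hne
    obtain ⟨n, rfl⟩ : ∃ n : ℕ, k = l + (n:ℤ) := ⟨(k - l).toNat, by omega⟩
    have h1 := CDConstruction.cube_nest (E := E) (X := X) n l x
    have h2 := CDConstruction.cube_unique (h1 hy1) hy2
    rw [← h2]
    exact h1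
  refine ⟨D, ctr, ?_, ?_, ?_, ?_⟩
  · rintro k Q ⟨x, hx, rfl⟩
    exact fun y hy => hy.1
  · rintro k l Q ⟨x, hx, rfl⟩ R ⟨w, hw, rfl⟩ hne
    rcases le_total l k with h | h
    · exact Or.inl (nest k l x w h hx hw hne)
    · refine Or.inr (nest l k w x h hw hx ?_)
      obtain ⟨y, hy1, hy2⟩ := hne
      exact ⟨y, hy2, hy1⟩
  · rintro k Q ⟨x, hx, rfl⟩
    have h : ∃ x', x' ∈ X k ∧ CDConstruction.cube E X k x = CDConstruction.cube E X k x' :=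
      ⟨x, hx, rfl⟩
    obtain ⟨hcX, hcEq⟩ := key k _ h
    refine ⟨hcX, ?_, ?_⟩
    · rintro y ⟨hyE, hyb⟩
      refine hcEq.symm.subset (CDConstruction.cube_core hXE hsep hcov hcX hyE ?_)
      rw [mem_closedBall] at hyb
      have : (1/20 : ℝ) * (5 * (1/10:ℝ) ^ k) = 1/4 * (1/10:ℝ) ^ k := by ring
      linarith
    · intro y hy
      have hb := CDConstruction.cube_subset_ball hXE hcov (hcEq.subset hy)
      rw [mem_closedBall]
      have := CDConstruction.rpos k
      linarith
  · intro k y hy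
    obtain ⟨hvX, hvd⟩ := CDConstruction.Vpt_spec hcov (k := k) hy
    have hQ : CDConstruction.cube E X k (CDConstruction.Vpt X k y) ∈ D k :=
      ⟨CDConstruction.Vpt X k y, hvX, rfl⟩
    have h : ∃ x', x' ∈ X k ∧ CDConstruction.cube E X k (CDConstruction.Vpt X k y) =
        CDConstruction.cube E X k x' := ⟨CDConstruction.Vpt X k y, hvX, rfl⟩
    obtain ⟨hcX, hcEq⟩ := key k _ h
    have hc0 : ctr k (CDConstruction.cube E X k (CDConstruction.Vpt X k y)) ∈
        CDConstruction.cube E X k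
          (ctr k (CDConstruction.cube E X k (CDConstruction.Vpt X k y))) :=
      CDConstruction.cube_core hXE hsep hcov hcX (hXE k hcX)
        (by rw [dist_self]; positivity)
    have hm1 := hcEq.symm.subset hc0
    have hxu := CDConstruction.cube_unique hm1 hc0
    refine mem_iUnion₂.mpr ⟨CDConstruction.cube E X k (CDConstruction.Vpt X k y), hQ, ?_⟩
    rw [mem_closedBall, ← hxu]
    have := CDConstruction.rpos k
    linarith
end

section
/- Let H be a real separable Hilbert space and d ≥ 1. Suppose E ⊆ H satisfies 0 < 𝓗^d_∞(E) < ∞, let φ : [0,∞) → [0,∞) be convex, and let f : H → [0,∞) be bounded. Then φ( (1/𝓗^d_∞(E)) ∫_E f d𝓗^d_∞ ) ≤ (1/𝓗^d_∞(E)) ∫_E (φ ∘ f) d𝓗^d_∞. -/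
open Metric Set MeasureTheory
open scoped ENNReal NNReal Classical

section JensenHelpers

variable {H : Type*} [NormedAddCommGroup H] [InnerProductSpace ℝ H]

private noncomputable def hcOM (d : ℕ) (hd : 1 ≤ d) : OuterMeasure H :=
  OuterMeasure.ofFunction (fun s : Set H => EMetric.diam s ^ (d : ℝ))
    (by show Metric.ediam (∅ : Set H) ^ (d : ℝ) = 0; rw [Metric.ediam_empty]
        exact ENNReal.zero_rpow_of_pos (by exact_mod_cast Nat.lt_of_lt_of_le Nat.zero_lt_one hd))

private lemma hContent_eq_hcOM (d : ℕ) (hd : 1 ≤ d) (A : Set H) :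
    hContent d A = hcOM d hd A := by
  rw [hcOM, OuterMeasure.ofFunction_apply]; rfl

private lemma hContent_mono (d : ℕ) {A B : Set H} (h : A ⊆ B) :
    hContent d A ≤ hContent d B :=
  le_iInf₂ fun t ht => iInf₂_le t (h.trans ht)

private lemma hContent_union (d : ℕ) (hd : 1 ≤ d) (A B : Set H) :
    hContent d (A ∪ B) ≤ hContent d A + hContent d B := by
  rw [hContent_eq_hcOM d hd, hContent_eq_hcOM d hd, hContent_eq_hcOM d hd]
  exact measure_union_le A B

private lemma hContent_iUnion (d : ℕ) (hd : 1 ≤ d) (A : ℕ → Set H) :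
    hContent d (⋃ n, A n) ≤ ∑' n, hContent d (A n) := by
  simp only [hContent_eq_hcOM d hd]
  exact measure_iUnion_le A

private lemma lintegral_affine {g : ℝ → ℝ≥0∞} (hg : Measurable g)
    {q : ℝ} (p : ℝ) (hq : q ≠ 0) (T : Set ℝ) (hT : MeasurableSet T) :
    ∫⁻ t in (fun t => q * t + p) ⁻¹' T, g (q * t + p) =
      ENNReal.ofReal |q⁻¹| * ∫⁻ u in T, g u := by
  have hψ : Measurable fun t : ℝ => q * t + p :=
    (measurable_const_mul q).add_const p
  have hmap : Measure.map (fun t : ℝ => q * t + p) volume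
      = ENNReal.ofReal |q⁻¹| • (volume : Measure ℝ) := by
    have : (fun t : ℝ => q * t + p) = (fun t : ℝ => t + p) ∘ (fun t : ℝ => q * t) := rfl
    rw [this, ← Measure.map_map (measurable_add_const p) (measurable_const_mul q),
      Real.map_volume_mul_left hq, Measure.map_smul,
      MeasureTheory.map_add_right_eq_self volume p]
  have h1 : ∀ t, ((fun t => q * t + p) ⁻¹' T).indicator (fun t => g (q * t + p)) t
      = T.indicator g (q * t + p) := by
    intro t
    by_cases ht : q * t + p ∈ T
    · rw [Set.indicator_of_mem (by exact ht), Set.indicator_of_mem ht]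
    · rw [Set.indicator_of_notMem (by exact ht), Set.indicator_of_notMem ht]
  rw [← lintegral_indicator (hψ hT)]
  simp only [h1]
  rw [← lintegral_map (hg.indicator hT) hψ, hmap, lintegral_smul_measure,
    lintegral_indicator hT, smul_eq_mul]

end JensenHelpers

set_option maxHeartbeats 2000000

/-- **Lemma 2.4 (Jensen's inequality for the Choquet integral).** Suppose `E ⊆ H` with
`0 < 𝓗^d_∞(E) < ∞`, `φ : [0,∞) → [0,∞)` is convex and `f : H → [0,∞)` is bounded. Then
`φ( (1/𝓗^d_∞(E)) ∫_E f d𝓗^d_∞ ) ≤ (1/𝓗^d_∞(E)) ∫_E (φ ∘ f) d𝓗^d_∞`. -/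
theorem choquet_jensen
    {H : Type*} [NormedAddCommGroup H] [InnerProductSpace ℝ H]
    [CompleteSpace H] [TopologicalSpace.SeparableSpace H]
    (d : ℕ) (hd : 1 ≤ d) (E : Set H)
    (hE0 : hContent d E ≠ 0) (hEtop : hContent d E ≠ ⊤)
    (φ : ℝ → ℝ) (hφ : ConvexOn ℝ (Set.Ici (0 : ℝ)) φ)
    (hφ0 : ∀ t : ℝ, 0 ≤ t → 0 ≤ φ t)
    (f : H → ℝ) (hf0 : ∀ x, 0 ≤ f x) (hfbd : ∃ M : ℝ, ∀ x, f x ≤ M) :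
    ENNReal.ofReal (φ ((choquet d E f).toReal / (hContent d E).toReal)) ≤
      choquet d E (fun x => φ (f x)) / hContent d E := by
  -- proof
  classical
  have hμ0 : hContent d E ≠ 0 := hE0
  have hμt : hContent d E ≠ ⊤ := hEtop
  have hμr : 0 < (hContent d E).toReal := ENNReal.toReal_pos hμ0 hμt
  set g : ℝ → ℝ≥0∞ := fun t => hContent d {x | x ∈ E ∧ t < f x} with hgdef
  have hganti : Antitone g := fun s t hst =>
    hContent_mono d fun x hx => ⟨hx.1, lt_of_le_of_lt hst hx.2⟩
  have hgmeas : Measurable g := hganti.measurable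
  have hgle : ∀ t, g t ≤ hContent d E := fun t => hContent_mono d fun x hx => hx.1
  set h : ℝ → ℝ≥0∞ := fun t => hContent d {x | x ∈ E ∧ t < φ (f x)} with hhdef
  have hhanti : Antitone h := fun s t hst =>
    hContent_mono d fun x hx => ⟨hx.1, lt_of_le_of_lt hst hx.2⟩
  have hhmeas : Measurable h := hhanti.measurable
  have hIc : choquet d E f = ∫⁻ t in Ioi (0:ℝ), g t := rfl
  have hJc : choquet d E (fun x => φ (f x)) = ∫⁻ t in Ioi (0:ℝ), h t := rfl
  set I : ℝ≥0∞ := ∫⁻ t in Ioi (0:ℝ), g t with hIdef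
  set J : ℝ≥0∞ := ∫⁻ t in Ioi (0:ℝ), h t with hJdef
  set μ : ℝ≥0∞ := hContent d E with hμdef
  -- finiteness of I
  obtain ⟨M, hM⟩ := hfbd
  have hIfin : I ≠ ⊤ := by
    have hsplit : I = (∫⁻ t in Ioc (0:ℝ) (max M 0), g t) + ∫⁻ t in Ioi (max M 0), g t := by
      rw [hIdef, ← Ioc_union_Ioi_eq_Ioi (le_max_right M 0),
        lintegral_union measurableSet_Ioi Ioc_disjoint_Ioi_same]
    have h2 : ∫⁻ t in Ioi (max M 0), g t = 0 := by
      have : ∀ t ∈ Ioi (max M 0), g t = 0 := by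
        intro t ht
        have : {x | x ∈ E ∧ t < f x} = (∅ : Set H) := by
          ext x
          simp only [mem_setOf_eq, mem_empty_iff_false, iff_false, not_and, not_lt]
          intro _
          exact (hM x).trans ((le_max_left M 0).trans (le_of_lt ht))
        rw [hgdef]
        simp only [this]
        rw [hContent_eq_hcOM d hd]
        exact measure_empty
      rw [setLIntegral_congr_fun measurableSet_Ioi this]
      simp
    have h3 : (∫⁻ t in Ioc (0:ℝ) (max M 0), g t) ≤ μ * ENNReal.ofReal (max M 0) := by
      calc (∫⁻ t in Ioc (0:ℝ) (max M 0), g t) ≤ ∫⁻ _ in Ioc (0:ℝ) (max M 0), μ :=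
            setLIntegral_mono' measurableSet_Ioc fun t _ => hgle t
        _ = μ * volume (Ioc (0:ℝ) (max M 0)) := setLIntegral_const _ _
        _ = μ * ENNReal.ofReal (max M 0) := by rw [Real.volume_Ioc, sub_zero]
    rw [hsplit, h2, add_zero]
    exact (h3.trans_lt (ENNReal.mul_lt_top (lt_top_iff_ne_top.2 hμt) ENNReal.ofReal_lt_top)).ne
  set a : ℝ := (choquet d E f).toReal / μ.toReal with hadef
  have haI : a = I.toReal / μ.toReal := by rw [hadef, hIc]
  have ha0 : 0 ≤ a := by rw [haI]; positivity
  have haμ : a * μ.toReal = I.toReal := by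
    rw [haI]; field_simp
  -- reduce goal
  suffices hmain : ENNReal.ofReal (φ a) * μ ≤ J by
    rw [hJc]
    exact (ENNReal.le_div_iff_mul_le (Or.inl hμ0) (Or.inl hμt)).mpr hmain
  by_cases hJtop : J = ⊤
  · rw [hJtop]; exact le_top
  -- main work
  by_cases hI0 : I = 0
  · -- degenerate case: mean is 0
    have ha : a = 0 := by rw [haI, hI0]; simp
    rw [ha]
    have hg0 : ∀ t : ℝ, 0 < t → g t = 0 := by
      intro t ht
      by_contra hne
      have h1 : g t * ENNReal.ofReal t ≤ I := by
        calc g t * ENNReal.ofReal t = g t * volume (Ioo 0 t) := by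
              rw [Real.volume_Ioo, sub_zero]
          _ = ∫⁻ _ in Ioo (0:ℝ) t, g t := (setLIntegral_const _ _).symm
          _ ≤ ∫⁻ s in Ioo (0:ℝ) t, g s :=
              setLIntegral_mono' measurableSet_Ioo fun s hs => hganti hs.2.le
          _ ≤ I := lintegral_mono_set Ioo_subset_Ioi_self
      rw [hI0, le_zero_iff] at h1
      rcases mul_eq_zero.mp h1 with h2 | h2
      · exact hne h2
      · exact (ENNReal.ofReal_pos.mpr ht).ne' h2
    have hfE : hContent d {x | x ∈ E ∧ 0 < f x} = 0 := by
      have hsub : {x | x ∈ E ∧ 0 < f x} ⊆ ⋃ n : ℕ, {x | x ∈ E ∧ (1:ℝ)/(n+1) < f x} := by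
        intro x hx
        obtain ⟨n, hn⟩ := exists_nat_one_div_lt hx.2
        exact mem_iUnion.mpr ⟨n, hx.1, hn⟩
      refine le_antisymm ?_ zero_le
      calc hContent d {x | x ∈ E ∧ 0 < f x}
          ≤ ∑' n : ℕ, hContent d {x | x ∈ E ∧ (1:ℝ)/(n+1) < f x} :=
            (hContent_mono d hsub).trans (hContent_iUnion d hd _)
        _ = 0 := by
            have : ∀ n : ℕ, hContent d {x | x ∈ E ∧ (1:ℝ)/(n+1) < f x} = 0 := by
              intro n
              have := hg0 ((1:ℝ)/(n+1)) (by positivity)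
              rw [hgdef] at this
              exact this
            exact ENNReal.tsum_eq_zero.mpr this
    have hμf0 : μ ≤ hContent d {x | x ∈ E ∧ f x = 0} := by
      have hsub : E ⊆ {x | x ∈ E ∧ f x = 0} ∪ {x | x ∈ E ∧ 0 < f x} := by
        intro x hx
        rcases eq_or_lt_of_le (hf0 x) with h1 | h1
        · exact Or.inl ⟨hx, h1.symm⟩
        · exact Or.inr ⟨hx, h1⟩
      calc μ ≤ hContent d ({x | x ∈ E ∧ f x = 0} ∪ {x | x ∈ E ∧ 0 < f x}) :=
            hContent_mono d hsub
        _ ≤ hContent d {x | x ∈ E ∧ f x = 0} + hContent d {x | x ∈ E ∧ 0 < f x} :=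
            hContent_union d hd _ _
        _ = hContent d {x | x ∈ E ∧ f x = 0} := by rw [hfE, add_zero]
    have hlow : ∀ t ∈ Ioo (0:ℝ) (φ 0), μ ≤ h t := by
      intro t ht
      refine hμf0.trans (hContent_mono d ?_)
      intro x hx
      exact ⟨hx.1, by rw [hx.2]; exact ht.2⟩
    calc ENNReal.ofReal (φ 0) * μ = μ * volume (Ioo (0:ℝ) (φ 0)) := by
          rw [Real.volume_Ioo, sub_zero, mul_comm]
      _ = ∫⁻ _ in Ioo (0:ℝ) (φ 0), μ := (setLIntegral_const _ _).symm
      _ ≤ ∫⁻ t in Ioo (0:ℝ) (φ 0), h t := setLIntegral_mono' measurableSet_Ioo hlow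
      _ ≤ J := lintegral_mono_set Ioo_subset_Ioi_self
  · -- nondegenerate case: a > 0, use a supporting line of φ at a
    have hIr : 0 < I.toReal := ENNReal.toReal_pos hI0 hIfin
    have hapos : 0 < a := by rw [haI]; positivity
    obtain ⟨α, hkey⟩ : ∃ α : ℝ, ∀ t, 0 ≤ t → φ a + α * (t - a) ≤ φ t := by
      set Sl : Set ℝ := (fun y => (φ y - φ a)/(y - a)) '' Ioi a with hSl
      have hne : Sl.Nonempty := ⟨_, ⟨a + 1, mem_Ioi.mpr (lt_add_of_pos_right a one_pos), rfl⟩⟩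
      have hbdd : BddBelow Sl := by
        refine ⟨(φ a - φ (a/2))/(a - a/2), ?_⟩
        rintro _ ⟨y, hy, rfl⟩
        exact hφ.slope_mono_adjacent (mem_Ici.mpr (by linarith))
          (mem_Ici.mpr (by have := mem_Ioi.mp hy; linarith)) (by linarith) (mem_Ioi.mp hy)
      refine ⟨sInf Sl, fun t ht => ?_⟩
      rcases lt_trichotomy t a with hta | hta | hta
      · have h5 : (φ a - φ t)/(a - t) ≤ sInf Sl := by
          refine le_csInf hne ?_
          rintro _ ⟨y, hy, rfl⟩
          exact hφ.slope_mono_adjacent (mem_Ici.mpr ht)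
            (mem_Ici.mpr (by have := mem_Ioi.mp hy; linarith)) hta (mem_Ioi.mp hy)
        have h6 := (div_le_iff₀ (by linarith : (0:ℝ) < a - t)).mp h5
        nlinarith
      · rw [hta]; simp
      · have h5 : sInf Sl ≤ (φ t - φ a)/(t - a) := csInf_le hbdd ⟨t, mem_Ioi.mpr hta, rfl⟩
        have h6 := (le_div_iff₀ (by linarith : (0:ℝ) < t - a)).mp h5
        linarith
    set β : ℝ := φ a - α * a with hβ
    have hkey' : ∀ t, 0 ≤ t → α * t + β ≤ φ t := by
      intro t ht
      have h1 := hkey t ht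
      have h2 : α * (t - a) = α * t - α * a := by ring
      rw [hβ]; linarith
    have hφa_eq : α * a + β = φ a := by rw [hβ]; ring
    set k : ℝ → ℝ≥0∞ := fun t => hContent d {x | x ∈ E ∧ t < α * f x + β} with hkdef
    have hkanti : Antitone k := fun s t hst =>
      hContent_mono d fun x hx => ⟨hx.1, lt_of_le_of_lt hst hx.2⟩
    have hkmeas : Measurable k := hkanti.measurable
    set K : ℝ≥0∞ := ∫⁻ t in Ioi (0:ℝ), k t with hKdef
    have hKJ : K ≤ J := by
      refine lintegral_mono fun t => hContent_mono d fun x hx =>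
        ⟨hx.1, lt_of_lt_of_le hx.2 (hkey' (f x) (hf0 x))⟩
    have hKt : K ≠ ⊤ := (hKJ.trans_lt (lt_top_iff_ne_top.2 hJtop)).ne
    have hKr : 0 ≤ K.toReal := ENNReal.toReal_nonneg
    suffices hfinal : ENNReal.ofReal (φ a) * μ ≤ K from hfinal.trans hKJ
    rcases le_or_gt (φ a) 0 with hφa0 | hφa0
    · rw [ENNReal.ofReal_eq_zero.mpr hφa0, zero_mul]; exact zero_le
    rcases lt_trichotomy α 0 with hα | hα | hα
    · -- α < 0
      have hβpos : 0 < β := by nlinarith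
      have hmain2 : ∀ ε : ℝ, ε ∈ Ioo (0:ℝ) 1 →
          ENNReal.ofReal β * μ ≤ K + ENNReal.ofReal ((-α)/(1-ε)) * I := by
        intro ε hε
        set q : ℝ := (1 - ε)/α with hq
        set p : ℝ := -β * q with hp
        have h1ε : 0 < 1 - ε := by linarith [hε.2]
        have hqneg : q < 0 := div_neg_of_pos_of_neg h1ε hα
        have hppos : 0 < p := by rw [hp]; nlinarith
        have hpre : (fun t => q * t + p) ⁻¹' (Ioo 0 p) = Ioo 0 β := by
          ext t
          simp only [mem_preimage, mem_Ioo, hp]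
          constructor
          · rintro ⟨h1, h2⟩
            constructor
            · nlinarith
            · nlinarith
          · rintro ⟨h1, h2⟩
            constructor
            · nlinarith
            · nlinarith
        have haff := lintegral_affine hgmeas p (ne_of_lt hqneg) (Ioo 0 p) measurableSet_Ioo
        rw [hpre] at haff
        have habs : |q⁻¹| = (-α)/(1-ε) := by
          have h7 : q⁻¹ = α / (1 - ε) := by rw [hq, inv_div]
          rw [h7, abs_of_neg (div_neg_of_neg_of_pos hα h1ε)]
          ring
        have hpt : ∀ t ∈ Ioo (0:ℝ) β, μ ≤ k t + g (q * t + p) := by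
          intro t ht
          have hsub : E ⊆ {x | x ∈ E ∧ t < α * f x + β} ∪ {x | x ∈ E ∧ q * t + p < f x} := by
            intro x hx
            rcases lt_or_ge (f x) ((β - t)/(-α)) with hlt | hge
            · left
              refine ⟨hx, ?_⟩
              have h8 : f x * (-α) < β - t := (lt_div_iff₀ (neg_pos.2 hα)).mp hlt
              nlinarith
            · right
              refine ⟨hx, ?_⟩
              have h8 : 0 < (β - t)/(-α) := div_pos (by linarith [ht.2]) (neg_pos.2 hα)
              have h9 : q * t + p = (1 - ε) * ((β - t)/(-α)) := by
                rw [hp, hq]; field_simp; ring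
              rw [h9]
              calc (1 - ε) * ((β - t)/(-α)) < 1 * ((β - t)/(-α)) := by nlinarith [hε.1]
                _ = (β - t)/(-α) := one_mul _
                _ ≤ f x := hge
          calc μ ≤ hContent d ({x | x ∈ E ∧ t < α * f x + β} ∪ {x | x ∈ E ∧ q * t + p < f x}) :=
                hContent_mono d hsub
            _ ≤ hContent d {x | x ∈ E ∧ t < α * f x + β}
                  + hContent d {x | x ∈ E ∧ q * t + p < f x} := hContent_union d hd _ _
            _ = k t + g (q * t + p) := rfl
        have hint : ENNReal.ofReal β * μ
            ≤ (∫⁻ t in Ioo (0:ℝ) β, k t) + ∫⁻ t in Ioo (0:ℝ) β, g (q * t + p) := by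
          calc ENNReal.ofReal β * μ = μ * volume (Ioo (0:ℝ) β) := by
                rw [Real.volume_Ioo, sub_zero, mul_comm]
            _ = ∫⁻ _ in Ioo (0:ℝ) β, μ := (setLIntegral_const _ _).symm
            _ ≤ ∫⁻ t in Ioo (0:ℝ) β, (k t + g (q * t + p)) :=
                setLIntegral_mono' measurableSet_Ioo hpt
            _ = _ := lintegral_add_left hkmeas _
        refine hint.trans (add_le_add ?_ ?_)
        · exact lintegral_mono_set Ioo_subset_Ioi_self
        · rw [haff, habs]
          exact mul_le_mul_right (lintegral_mono_set Ioo_subset_Ioi_self) _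
      have hKr2 : ∀ ε ∈ Ioo (0:ℝ) 1,
          β * μ.toReal ≤ K.toReal + (-α)/(1-ε) * I.toReal := by
        intro ε hε
        have h10 := hmain2 ε hε
        have hfin : K + ENNReal.ofReal ((-α)/(1-ε)) * I ≠ ⊤ :=
          ENNReal.add_ne_top.2 ⟨hKt, ENNReal.mul_ne_top ENNReal.ofReal_ne_top hIfin⟩
        have h11 := ENNReal.toReal_mono hfin h10
        have hdiv : 0 ≤ (-α)/(1-ε) := by
          apply div_nonneg (by linarith) (by linarith [hε.2])
        rwa [ENNReal.toReal_mul, ENNReal.toReal_ofReal hβpos.le,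
          ENNReal.toReal_add hKt (ENNReal.mul_ne_top ENNReal.ofReal_ne_top hIfin),
          ENNReal.toReal_mul, ENNReal.toReal_ofReal hdiv] at h11
      have hlim : β * μ.toReal ≤ K.toReal + (-α) * I.toReal := by
        have hcont : Filter.Tendsto (fun ε : ℝ => K.toReal + (-α)/(1-ε) * I.toReal)
            (nhdsWithin 0 (Ioi 0)) (nhds (K.toReal + (-α)/(1-(0:ℝ)) * I.toReal)) := by
          apply Filter.Tendsto.mono_left ?_ nhdsWithin_le_nhds
          apply ContinuousAt.tendsto
          apply ContinuousAt.add continuousAt_const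
          apply ContinuousAt.mul ?_ continuousAt_const
          exact ContinuousAt.div continuousAt_const
            (continuousAt_const.sub continuousAt_id) (by norm_num)
        rw [show (1:ℝ) - 0 = 1 by ring, div_one] at hcont
        refine ge_of_tendsto hcont ?_
        filter_upwards [Ioo_mem_nhdsGT (by norm_num : (0:ℝ) < 1)] with ε hε
        exact hKr2 ε hε
      have hfin2 : φ a * μ.toReal ≤ K.toReal := by
        calc φ a * μ.toReal = α * (a * μ.toReal) + β * μ.toReal := by
              rw [← hφa_eq]; ring
          _ = α * I.toReal + β * μ.toReal := by rw [haμ]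
          _ ≤ K.toReal := by linarith
      calc ENNReal.ofReal (φ a) * μ = ENNReal.ofReal (φ a * μ.toReal) := by
            rw [ENNReal.ofReal_mul hφa0.le, ENNReal.ofReal_toReal hμt]
        _ ≤ ENNReal.ofReal K.toReal := ENNReal.ofReal_le_ofReal hfin2
        _ = K := ENNReal.ofReal_toReal hKt
    · -- α = 0
      have hβφ : β = φ a := by rw [hβ, hα]; ring
      have hlow : ∀ t ∈ Ioo (0:ℝ) β, μ ≤ k t := by
        intro t ht
        refine hContent_mono d ?_
        intro x hx
        exact ⟨hx, by rw [hα]; simpa using ht.2⟩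
      calc ENNReal.ofReal (φ a) * μ = μ * volume (Ioo (0:ℝ) β) := by
            rw [Real.volume_Ioo, sub_zero, hβφ, mul_comm]
        _ = ∫⁻ _ in Ioo (0:ℝ) β, μ := (setLIntegral_const _ _).symm
        _ ≤ ∫⁻ t in Ioo (0:ℝ) β, k t := setLIntegral_mono' measurableSet_Ioo hlow
        _ ≤ K := lintegral_mono_set Ioo_subset_Ioi_self
    · -- α > 0
      set c : ℝ := -β / α with hc
      have hset : ∀ t : ℝ, k t = g (α⁻¹ * t + -β/α) := by
        intro t
        show hContent d {x | x ∈ E ∧ t < α * f x + β}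
          = hContent d {x | x ∈ E ∧ α⁻¹ * t + -β/α < f x}
        congr 1
        ext x
        simp only [mem_setOf_eq, and_congr_right_iff]
        intro _
        have h12 : α⁻¹ * t + -β/α = (t - β)/α := by field_simp; ring
        rw [h12, div_lt_iff₀ hα]
        constructor <;> intro h13 <;> nlinarith
      have hKeq : K = ENNReal.ofReal α * ∫⁻ u in Ioi c, g u := by
        have hpre : (fun t : ℝ => α⁻¹ * t + -β/α) ⁻¹' (Ioi c) = Ioi 0 := by
          ext t
          simp only [mem_preimage, mem_Ioi, hc]
          have hαi : 0 < α⁻¹ := inv_pos.mpr hα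
          constructor <;> intro h13 <;> nlinarith
        have haff := lintegral_affine hgmeas (-β/α) (inv_ne_zero hα.ne') (Ioi c) measurableSet_Ioi
        rw [hpre] at haff
        rw [hKdef]
        simp only [hset]
        rw [haff, inv_inv, abs_of_pos hα]
      have hGle : (∫⁻ u in Ioi c, g u) ≤ ENNReal.ofReal α⁻¹ * K := by
        rw [hKeq, ← mul_assoc, ← ENNReal.ofReal_mul (by positivity),
          inv_mul_cancel₀ hα.ne', ENNReal.ofReal_one, one_mul]
      have hGt : (∫⁻ u in Ioi c, g u) ≠ ⊤ :=
        (hGle.trans_lt (ENNReal.mul_lt_top ENNReal.ofReal_lt_top (lt_top_iff_ne_top.2 hKt))).ne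
      have hφac : φ a = α * (a - c) := by
        have h14 : α * c = -β := by rw [hc]; field_simp
        nlinarith [hφa_eq]
      rcases le_or_gt 0 c with hcpos | hcneg
      · -- 0 ≤ c
        have hsplit : I ≤ μ * ENNReal.ofReal c + ∫⁻ u in Ioi c, g u := by
          calc I = ∫⁻ u in Ioc 0 c ∪ Ioi c, g u := by rw [Ioc_union_Ioi_eq_Ioi hcpos]
            _ = (∫⁻ u in Ioc (0:ℝ) c, g u) + ∫⁻ u in Ioi c, g u :=
                lintegral_union measurableSet_Ioi Ioc_disjoint_Ioi_same
            _ ≤ μ * ENNReal.ofReal c + ∫⁻ u in Ioi c, g u := by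
                refine add_le_add_left ?_ _
                calc (∫⁻ u in Ioc (0:ℝ) c, g u) ≤ ∫⁻ _ in Ioc (0:ℝ) c, μ :=
                      setLIntegral_mono' measurableSet_Ioc fun u _ => hgle u
                  _ = μ * volume (Ioc (0:ℝ) c) := setLIntegral_const _ _
                  _ = μ * ENNReal.ofReal c := by rw [Real.volume_Ioc, sub_zero]
        have h15 : I.toReal ≤ μ.toReal * c + (∫⁻ u in Ioi c, g u).toReal := by
          have hfin : μ * ENNReal.ofReal c + (∫⁻ u in Ioi c, g u) ≠ ⊤ :=
            ENNReal.add_ne_top.2 ⟨ENNReal.mul_ne_top hμt ENNReal.ofReal_ne_top, hGt⟩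
          have h16 := ENNReal.toReal_mono hfin hsplit
          rwa [ENNReal.toReal_add (ENNReal.mul_ne_top hμt ENNReal.ofReal_ne_top) hGt,
            ENNReal.toReal_mul, ENNReal.toReal_ofReal hcpos] at h16
        have h17 : (a - c) * μ.toReal ≤ (∫⁻ u in Ioi c, g u).toReal := by nlinarith [haμ]
        have hac : 0 ≤ a - c := by nlinarith [hφac, hφa0]
        calc ENNReal.ofReal (φ a) * μ
            = ENNReal.ofReal α * ENNReal.ofReal ((a - c) * μ.toReal) := by
              conv_lhs => rw [hφac, ENNReal.ofReal_mul hα.le, mul_assoc,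
                ← ENNReal.ofReal_toReal hμt, ← ENNReal.ofReal_mul hac]
          _ ≤ ENNReal.ofReal α * ENNReal.ofReal (∫⁻ u in Ioi c, g u).toReal :=
              mul_le_mul_right (ENNReal.ofReal_le_ofReal h17) _
          _ = ENNReal.ofReal α * ∫⁻ u in Ioi c, g u := by rw [ENNReal.ofReal_toReal hGt]
          _ = K := hKeq.symm
      · -- c < 0
        have hgc : ∀ u : ℝ, u < 0 → g u = μ := by
          intro u hu
          show hContent d {x | x ∈ E ∧ u < f x} = hContent d E
          congr 1
          ext x
          simp only [mem_setOf_eq]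
          exact ⟨fun hx => hx.1, fun hx => ⟨hx, hu.trans_le (hf0 x)⟩⟩
        have h18 : μ * ENNReal.ofReal (-c) + I ≤ ∫⁻ u in Ioi c, g u := by
          have h19 : μ * ENNReal.ofReal (-c) = ∫⁻ u in Ioo c 0, g u := by
            rw [setLIntegral_congr_fun measurableSet_Ioo
              (fun u (hu : u ∈ Ioo c 0) => hgc u hu.2),
              setLIntegral_const, Real.volume_Ioo, zero_sub]
          rw [h19]
          calc (∫⁻ u in Ioo c 0, g u) + I = ∫⁻ u in Ioo c 0 ∪ Ioi 0, g u :=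
                (lintegral_union measurableSet_Ioi
                  (Set.disjoint_left.mpr fun u hu hu' => absurd hu.2 (not_lt.mpr hu'.le))).symm
            _ ≤ ∫⁻ u in Ioi c, g u :=
                lintegral_mono_set (union_subset Ioo_subset_Ioi_self
                  (Ioi_subset_Ioi hcneg.le))
        have h20 : ENNReal.ofReal a * μ = I := by
          rw [← ENNReal.ofReal_toReal hμt, ← ENNReal.ofReal_mul ha0, haμ,
            ENNReal.ofReal_toReal hIfin]
        calc ENNReal.ofReal (φ a) * μ
            = ENNReal.ofReal α * ((ENNReal.ofReal (-c) + ENNReal.ofReal a) * μ) := by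
              rw [hφac, ← ENNReal.ofReal_add (by linarith) ha0]
              rw [show -c + a = a - c by ring, ENNReal.ofReal_mul hα.le, mul_assoc]
          _ = ENNReal.ofReal α * (μ * ENNReal.ofReal (-c) + I) := by
              rw [add_mul, ← h20]; ring_nf
          _ ≤ ENNReal.ofReal α * ∫⁻ u in Ioi c, g u := mul_le_mul_right h18 _
          _ = K := hKeq.symm
end

section
/- Let H be a real separable Hilbert space, Γ ≥ 1, r > 0, and let {B(x_i,r)}_{i∈I} be a collection of balls in H such that Σ_{i∈I} 1_{B(x_i,10r)}(x) ≤ Γ for all x ∈ H. Then there are smooth (infinitely Fréchet differentiable) Lipschitz functions φ_i : H → [0,1], i ∈ I, such that: (1) supp φ_i ⊆ B(x_i, 10r); (2) Σ_{i∈I} φ_i = 1 on ⋃_{i∈I} B(x_i, 8r); (3) for every m ≥ 0 there is a constant C(Γ,m) with ‖D^m φ_i(y)‖ ≤ C(Γ,m) r^{-m} for all y ∈ H and i ∈ I, where D^m φ_i denotes the m-th Fréchet derivative. -/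
open Metric Set MeasureTheory
open scoped ENNReal NNReal Classical

section SPUAux

open Filter

private lemma spu_iter_congr {E F : Type*} [NormedAddCommGroup E] [NormedSpace ℝ E]
    [NormedAddCommGroup F] [NormedSpace ℝ F] {f g : E → F} {x : E}
    (h : f =ᶠ[nhds x] g) (n : ℕ) :
    iteratedFDeriv ℝ n f x = iteratedFDeriv ℝ n g x := by
  simp only [← iteratedFDerivWithin_univ]
  exact Filter.EventuallyEq.iteratedFDerivWithin_eq
    (by simpa [nhdsWithin_univ] using h) h.eq_of_nhds n

private lemma spu_bound_Icc (f : ℝ → ℝ) (hf : ContDiff ℝ (⊤ : ℕ∞) f) (a b : ℝ) (m : ℕ) :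
    ∃ C : ℝ, 1 ≤ C ∧ ∀ j, j ≤ m → ∀ t ∈ Set.Icc a b, ‖iteratedFDeriv ℝ j f t‖ ≤ C := by
  induction m with
  | zero =>
      obtain ⟨C, hC⟩ := isCompact_Icc.exists_bound_of_continuousOn
        ((ContDiff.continuous_iteratedFDeriv (m := 0) (by exact_mod_cast le_top) hf).continuousOn)
      refine ⟨max C 1, le_max_right _ _, ?_⟩
      intro j hj t ht
      interval_cases j
      exact (hC t ht).trans (le_max_left _ _)
  | succ m ih =>
      obtain ⟨C, hC1, hC⟩ := ih
      obtain ⟨C', hC'⟩ := isCompact_Icc.exists_bound_of_continuousOn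
        ((ContDiff.continuous_iteratedFDeriv (m := m + 1) (by exact_mod_cast le_top)
          hf).continuousOn)
      refine ⟨max C C', hC1.trans (le_max_left _ _), ?_⟩
      intro j hj t ht
      rcases eq_or_lt_of_le hj with h | h
      · subst h
        exact (hC' t ht).trans (le_max_right _ _)
      · exact (hC j (Nat.lt_succ_iff.mp h) t ht).trans (le_max_left _ _)

private noncomputable def spuTh : ℝ → ℝ := fun t => Real.smoothTransition ((81 - t) / 17)

private lemma spuTh_contDiff : ContDiff ℝ (⊤ : ℕ∞) spuTh :=
  Real.smoothTransition.contDiff.comp ((contDiff_const.sub contDiff_id).div_const 17)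

private lemma spuTh_nonneg (t : ℝ) : 0 ≤ spuTh t := Real.smoothTransition.nonneg _

private lemma spuTh_le_one (t : ℝ) : spuTh t ≤ 1 := Real.smoothTransition.le_one _

private lemma spuTh_one {t : ℝ} (h : t ≤ 64) : spuTh t = 1 :=
  Real.smoothTransition.one_of_one_le
    (by rw [le_div_iff₀ (by norm_num : (0:ℝ) < 17)]; linarith)

private lemma spuTh_zero {t : ℝ} (h : 81 ≤ t) : spuTh t = 0 :=
  Real.smoothTransition.zero_of_nonpos
    (by rw [div_nonpos_iff]; exact Or.inr ⟨by linarith, by norm_num⟩)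

private noncomputable def spuF : ℝ → ℝ := fun t => 1 + Real.smoothTransition (2 * t - 1) * (t - 1)

private lemma spuF_contDiff : ContDiff ℝ (⊤ : ℕ∞) spuF :=
  contDiff_const.add
    ((Real.smoothTransition.contDiff.comp
      ((contDiff_const.mul contDiff_id).sub contDiff_const)).mul
        (contDiff_id.sub contDiff_const))

private lemma spuF_eq {t : ℝ} (h : 1 ≤ t) : spuF t = t := by
  unfold spuF
  rw [Real.smoothTransition.one_of_one_le (by linarith)]
  ring

private lemma spuF_ge (t : ℝ) : t ≤ spuF t := by
  by_cases h : 1 ≤ t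
  · rw [spuF_eq h]
  · push_neg at h
    have h1 := Real.smoothTransition.nonneg (2 * t - 1)
    have h2 := Real.smoothTransition.le_one (2 * t - 1)
    unfold spuF
    nlinarith

private lemma spuF_ge_half (t : ℝ) : (1:ℝ)/2 ≤ spuF t := by
  by_cases h : (1:ℝ)/2 ≤ t
  · exact h.trans (spuF_ge t)
  · push_neg at h
    have h0 : Real.smoothTransition (2 * t - 1) = 0 :=
      Real.smoothTransition.zero_of_nonpos (by linarith)
    unfold spuF
    rw [h0]
    norm_num

private lemma spuF_pos (t : ℝ) : 0 < spuF t := lt_of_lt_of_le (by norm_num) (spuF_ge_half t)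

private noncomputable def spuU : ℝ → ℝ := fun t => (spuF t)⁻¹

private lemma spuU_contDiff : ContDiff ℝ (⊤ : ℕ∞) spuU :=
  spuF_contDiff.inv fun t => (spuF_pos t).ne'

set_option maxHeartbeats 1000000 in
private lemma spu_g_deriv_bound {H : Type*} [NormedAddCommGroup H] [InnerProductSpace ℝ H]
    (c0 : H) {r : ℝ} (hr : 0 < r) (x : H) (hx : ‖x - c0‖ ≤ 10 * r) :
    ∀ j : ℕ, 1 ≤ j →
      ‖iteratedFDeriv ℝ j (fun y : H => (r ^ 2)⁻¹ * ‖y - c0‖ ^ 2) x‖ ≤ (20 / r) ^ j := by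
  have hr2 : (0:ℝ) < r ^ 2 := by positivity
  set B : H →L[ℝ] H →L[ℝ] ℝ :=
    (isBoundedBilinearMap_inner (𝕜 := ℝ) (E := H)).toContinuousLinearMap with hB
  have hBapp : ∀ v w : H, B v w = inner ℝ v w := fun v w => rfl
  set Bc : H →L[ℝ] H →L[ℝ] ℝ := ((r ^ 2)⁻¹ * 2) • B with hBc
  have hBcapp : ∀ v w : H, Bc v w = (r ^ 2)⁻¹ * 2 * inner ℝ v w := by
    intro v w
    rw [hBc]
    simp [hBapp]
  have habs : ∀ v w : H, ‖Bc v w‖ = (r ^ 2)⁻¹ * 2 * |(inner ℝ v w : ℝ)| := by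
    intro v w
    rw [hBcapp, Real.norm_eq_abs, abs_mul, abs_of_nonneg (by positivity : (0:ℝ) ≤ (r ^ 2)⁻¹ * 2)]
  have hfd : (fderiv ℝ fun y : H => (r ^ 2)⁻¹ * ‖y - c0‖ ^ 2) = fun y => Bc (y - c0) := by
    funext y
    have h1 : HasFDerivAt (fun z : H => ‖z - c0‖ ^ 2)
        (2 • ((innerSL ℝ) (y - c0)).comp (ContinuousLinearMap.id ℝ H)) y :=
      HasFDerivAt.norm_sq ((hasFDerivAt_id y).sub_const c0)
    have h2 := h1.const_mul ((r ^ 2)⁻¹)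
    rw [h2.fderiv]
    ext v
    rw [hBcapp]
    simp [innerSL_apply_apply, inner_sub_left]
    ring
  have hfd2 : (fderiv ℝ fun y : H => Bc (y - c0)) = fun _ : H => Bc := by
    have heq : (fun y : H => Bc (y - c0)) = fun y : H => Bc y - Bc c0 := by
      funext z; rw [map_sub]
    rw [heq]
    funext y
    exact (Bc.hasFDerivAt.sub_const (Bc c0)).fderiv
  intro j hj
  obtain ⟨k, rfl⟩ : ∃ k, j = k + 1 := ⟨j - 1, by omega⟩
  rw [← norm_iteratedFDeriv_fderiv, hfd]
  cases k with
  | zero =>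
      rw [norm_iteratedFDeriv_zero]
      rw [show ((20:ℝ) / r) ^ (0 + 1) = 20 / r from by ring]
      refine ContinuousLinearMap.opNorm_le_bound _ (by positivity) fun v => ?_
      calc ‖Bc (x - c0) v‖ = (r ^ 2)⁻¹ * 2 * |(inner ℝ (x - c0) v : ℝ)| := habs _ _
        _ ≤ (r ^ 2)⁻¹ * 2 * (‖x - c0‖ * ‖v‖) :=
            mul_le_mul_of_nonneg_left (abs_real_inner_le_norm _ _) (by positivity)
        _ ≤ (r ^ 2)⁻¹ * 2 * ((10 * r) * ‖v‖) :=
            mul_le_mul_of_nonneg_left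
              (mul_le_mul_of_nonneg_right hx (norm_nonneg v)) (by positivity)
        _ = 20 / r * ‖v‖ := by field_simp; ring
  | succ k =>
      rw [← norm_iteratedFDeriv_fderiv, hfd2]
      cases k with
      | zero =>
          rw [norm_iteratedFDeriv_zero]
          have hBcnorm : ‖Bc‖ ≤ 2 / r ^ 2 := by
            refine ContinuousLinearMap.opNorm_le_bound _ (by positivity) fun v => ?_
            refine ContinuousLinearMap.opNorm_le_bound _ (by positivity) fun w => ?_
            calc ‖Bc v w‖ = (r ^ 2)⁻¹ * 2 * |(inner ℝ v w : ℝ)| := habs _ _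
              _ ≤ (r ^ 2)⁻¹ * 2 * (‖v‖ * ‖w‖) :=
                  mul_le_mul_of_nonneg_left (abs_real_inner_le_norm _ _) (by positivity)
              _ = 2 / r ^ 2 * ‖v‖ * ‖w‖ := by ring
          refine hBcnorm.trans ?_
          have h400 : ((20:ℝ) / r) ^ (0 + 1 + 1) = 400 / r ^ 2 := by
            rw [show (0+1+1) = 2 from rfl, div_pow]
            norm_num
          rw [h400, div_le_div_iff₀ hr2 hr2]
          nlinarith
      | succ l =>
          rw [iteratedFDeriv_const_of_ne (by omega : l + 1 ≠ 0)]
          simp only [Pi.zero_apply, norm_zero]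
          positivity

end SPUAux

set_option maxHeartbeats 2000000 in
/-- **Lemma 3.3 (smooth partition of unity in Hilbert space).** Let `Γ ≥ 1`, `r > 0`, and
let `{B(xᵢ,r)}` be balls with `Σᵢ 1_{B(xᵢ,10r)} ≤ Γ` pointwise. Then there are smooth
Lipschitz functions `φᵢ : H → [0,1]` with `supp φᵢ ⊆ B(xᵢ,10r)`, `Σᵢ φᵢ = 1` on
`⋃ᵢ B(xᵢ,8r)`, and `‖D^m φᵢ(y)‖ ≤ C(Γ,m) r^{-m}` for all `y ∈ H` and `m ≥ 0`. -/
theorem smooth_partition_of_unity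
    {H : Type*} [NormedAddCommGroup H] [InnerProductSpace ℝ H]
    [CompleteSpace H] [TopologicalSpace.SeparableSpace H]
    {I : Type*} (Γ r : ℝ) (hΓ : 1 ≤ Γ) (hr : 0 < r) (c : I → H)
    (hover : ∀ x : H,
      ∑' i : I, (if x ∈ closedBall (c i) (10 * r) then (1 : ℝ≥0∞) else 0) ≤
        ENNReal.ofReal Γ) :
    ∃ φ : I → H → ℝ,
      (∀ i, ContDiff ℝ (⊤ : ℕ∞) (φ i)) ∧
      (∀ i, ∃ K : ℝ≥0, LipschitzWith K (φ i)) ∧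
      (∀ i x, φ i x ∈ Set.Icc (0 : ℝ) 1) ∧
      (∀ i, tsupport (φ i) ⊆ closedBall (c i) (10 * r)) ∧
      (∀ x ∈ ⋃ i, closedBall (c i) (8 * r), HasSum (fun i => φ i x) 1) ∧
      (∀ m : ℕ, ∃ C : ℝ, 0 < C ∧
        ∀ i y, ‖iteratedFDeriv ℝ m (φ i) y‖ ≤ C / r ^ m) := by
  classical
  have hr2 : (0:ℝ) < r ^ 2 := by positivity
  have hΓ0 : (0:ℝ) < Γ := lt_of_lt_of_le one_pos hΓ
  -- counting
  have hcount : ∀ (x : H) (t : Finset I),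
      (∀ i ∈ t, x ∈ closedBall (c i) (10 * r)) → (t.card : ℝ) ≤ Γ := by
    intro x t ht
    have h1 : (t.card : ℝ≥0∞) ≤ ENNReal.ofReal Γ := by
      calc (t.card : ℝ≥0∞) = ∑ _i ∈ t, (1:ℝ≥0∞) := by simp
        _ = ∑ i ∈ t, (if x ∈ closedBall (c i) (10 * r) then (1:ℝ≥0∞) else 0) :=
            Finset.sum_congr rfl fun i hi => (if_pos (ht i hi)).symm
        _ ≤ _ := (ENNReal.sum_le_tsum t).trans (hover x)
    rwa [← ENNReal.ofReal_natCast, ENNReal.ofReal_le_ofReal_iff hΓ0.le] at h1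
  have hFin : ∀ x : H, {i : I | x ∈ closedBall (c i) (10 * r)}.Finite := by
    intro x
    rw [← Set.not_infinite]
    intro hinf
    obtain ⟨t, hts, htc⟩ := hinf.exists_subset_card_eq (Nat.floor Γ + 1)
    have h1 := hcount x t fun i hi => hts hi
    rw [htc] at h1
    have h2 := Nat.lt_floor_add_one Γ
    push_cast at h1
    linarith
  -- the bump functions
  set ψ : I → H → ℝ := fun i x => spuTh ((r ^ 2)⁻¹ * ‖x - c i‖ ^ 2) with hψdef
  have hψ_cd : ∀ i, ContDiff ℝ (⊤ : ℕ∞) (ψ i) := fun i =>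
    spuTh_contDiff.comp
      (contDiff_const.mul ((contDiff_norm_sq ℝ).comp (contDiff_id.sub contDiff_const)))
  have hψ01 : ∀ i x, ψ i x ∈ Icc (0:ℝ) 1 := fun i x => ⟨spuTh_nonneg _, spuTh_le_one _⟩
  have hψ_one : ∀ i x, dist x (c i) ≤ 8 * r → ψ i x = 1 := by
    intro i x h
    apply spuTh_one
    rw [dist_eq_norm] at h
    have h2 : ‖x - c i‖ ^ 2 ≤ 64 * r ^ 2 := by nlinarith [norm_nonneg (x - c i)]
    calc (r ^ 2)⁻¹ * ‖x - c i‖ ^ 2 ≤ (r ^ 2)⁻¹ * (64 * r ^ 2) :=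
          mul_le_mul_of_nonneg_left h2 (by positivity)
      _ = 64 := by field_simp
  have hψ_zero : ∀ i x, 9 * r ≤ dist x (c i) → ψ i x = 0 := by
    intro i x h
    apply spuTh_zero
    rw [dist_eq_norm] at h
    have h2 : 81 * r ^ 2 ≤ ‖x - c i‖ ^ 2 := by nlinarith [norm_nonneg (x - c i)]
    calc (81:ℝ) = (r ^ 2)⁻¹ * (81 * r ^ 2) := by field_simp
      _ ≤ (r ^ 2)⁻¹ * ‖x - c i‖ ^ 2 := mul_le_mul_of_nonneg_left h2 (by positivity)
  have hψ_supp : ∀ i x, ψ i x ≠ 0 → dist x (c i) < 9 * r := by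
    intro i x h
    by_contra h2
    exact h (hψ_zero i x (not_lt.mp h2))
  -- finite overlap finsets
  set s : H → Finset I := fun x => (hFin x).toFinset with hsdef
  have hmem_s : ∀ x i, i ∈ s x ↔ dist x (c i) ≤ 10 * r := by
    intro x i
    rw [hsdef]
    simp [Set.Finite.mem_toFinset]
  have hcard : ∀ x, ((s x).card : ℝ) ≤ Γ := fun x =>
    hcount x (s x) fun i hi => mem_closedBall.mpr ((hmem_s x i).mp hi)
  -- the sum S
  set S : H → ℝ := fun x => ∑' i, ψ i x with hSdef
  have hloc : ∀ x : H, ∀ y ∈ ball x (r / 2), ∀ i, i ∉ s x → ψ i y = 0 := by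
    intro x y hy i hi
    by_contra h
    have h1 := hψ_supp i y h
    rw [mem_ball] at hy
    have h3 : dist x (c i) ≤ dist x y + dist y (c i) := dist_triangle _ _ _
    have h4 : dist x y < r / 2 := by rw [dist_comm]; exact hy
    exact hi ((hmem_s x i).mpr (by linarith))
  have hS_eq : ∀ x : H, ∀ y ∈ ball x (r / 2), S y = ∑ i ∈ s x, ψ i y := fun x y hy =>
    tsum_eq_sum fun i hi => hloc x y hy i hi
  have hself : ∀ x : H, x ∈ ball x (r / 2) := fun x => mem_ball_self (by linarith)
  have hev : ∀ x : H, S =ᶠ[nhds x] fun y => ∑ i ∈ s x, ψ i y := fun x =>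
    Filter.eventuallyEq_of_mem (ball_mem_nhds x (by linarith)) fun y hy => hS_eq x y hy
  have hsum_cd : ∀ t : Finset I, ContDiff ℝ (⊤ : ℕ∞) fun y => ∑ i ∈ t, ψ i y := fun t =>
    ContDiff.sum fun i _ => hψ_cd i
  have hS_cd : ContDiff ℝ (⊤ : ℕ∞) S := by
    rw [contDiff_iff_contDiffAt]
    intro x
    exact ((hsum_cd (s x)).contDiffAt).congr_of_eventuallyEq (hev x)
  have hS_iter_eq : ∀ (x : H) (n : ℕ),
      iteratedFDeriv ℝ n S x = ∑ i ∈ s x, iteratedFDeriv ℝ n (ψ i) x := by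
    intro x n
    rw [spu_iter_congr (hev x) n,
      iteratedFDeriv_sum fun i _ => (hψ_cd i).of_le (by exact_mod_cast le_top)]
    simp
  have hψS : ∀ i x, ψ i x ≤ S x := by
    intro i x
    rw [hS_eq x x (hself x)]
    by_cases h : i ∈ s x
    · exact Finset.single_le_sum (fun j _ => (hψ01 j x).1) h
    · have h0 : ψ i x = 0 := by
        by_contra hne
        exact h ((hmem_s x i).mpr ((hψ_supp i x hne).le.trans (by linarith)))
      rw [h0]
      exact Finset.sum_nonneg fun j _ => (hψ01 j x).1
  have hS_nonneg : ∀ x, 0 ≤ S x := by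
    intro x
    rw [hS_eq x x (hself x)]
    exact Finset.sum_nonneg fun j _ => (hψ01 j x).1
  have hS_le : ∀ x, S x ≤ Γ := by
    intro x
    rw [hS_eq x x (hself x)]
    calc ∑ i ∈ s x, ψ i x ≤ ∑ _i ∈ s x, (1:ℝ) := Finset.sum_le_sum fun i _ => (hψ01 i x).2
      _ = ((s x).card : ℝ) := by simp
      _ ≤ Γ := hcard x
  have hS_ge1 : ∀ x ∈ ⋃ i, closedBall (c i) (8 * r), 1 ≤ S x := by
    intro x hx
    obtain ⟨i, hi⟩ := Set.mem_iUnion.mp hx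
    calc (1:ℝ) = ψ i x := (hψ_one i x (mem_closedBall.mp hi)).symm
      _ ≤ S x := hψS i x
  -- normalization
  set v : H → ℝ := fun x => spuU (S x) with hvdef
  have hv_cd : ContDiff ℝ (⊤ : ℕ∞) v := spuU_contDiff.comp hS_cd
  set φ : I → H → ℝ := fun i x => ψ i x * v x with hφdef
  have hφ_cd : ∀ i, ContDiff ℝ (⊤ : ℕ∞) (φ i) := fun i => (hψ_cd i).mul hv_cd
  have hv_pos : ∀ x, 0 < v x := fun x => inv_pos.mpr (spuF_pos (S x))
  have hφ01 : ∀ i x, φ i x ∈ Set.Icc (0:ℝ) 1 := by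
    intro i x
    constructor
    · exact mul_nonneg (hψ01 i x).1 (hv_pos x).le
    · have h1 : ψ i x ≤ spuF (S x) := (hψS i x).trans (spuF_ge (S x))
      have h2 : φ i x = ψ i x / spuF (S x) := by rw [hφdef, hvdef]; rfl
      rw [h2, div_le_one (spuF_pos (S x))]
      exact h1
  -- derivative bounds
  have hDB : ∀ m : ℕ, ∃ C : ℝ, 0 < C ∧
      ∀ i y, ‖iteratedFDeriv ℝ m (φ i) y‖ ≤ C / r ^ m := by
    intro m
    obtain ⟨Cθ, hCθ1, hCθ⟩ := spu_bound_Icc spuTh spuTh_contDiff 0 100 m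
    obtain ⟨Cu, hCu1, hCu⟩ := spu_bound_Icc spuU spuU_contDiff 0 Γ m
    set M : ℝ := Γ * m.factorial * Cθ + 1 with hMdef
    have hM1 : (1:ℝ) ≤ M := by
      have : (0:ℝ) ≤ Γ * m.factorial * Cθ := by positivity
      linarith
    set K : ℝ := 20 * M with hKdef
    have hK20 : (20:ℝ) ≤ K := by nlinarith
    have hK0 : (0:ℝ) < K := by linarith
    -- bound for ψ derivatives
    have hψ_bound : ∀ j, j ≤ m → ∀ i x,
        ‖iteratedFDeriv ℝ j (ψ i) x‖ ≤ j.factorial * Cθ * (20 / r) ^ j := by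
      intro j hj i x
      by_cases hx : dist x (c i) ≤ 10 * r
      · have hxn : ‖x - c i‖ ≤ 10 * r := by rwa [dist_eq_norm] at hx
        have hmemIcc : (r ^ 2)⁻¹ * ‖x - c i‖ ^ 2 ∈ Icc (0:ℝ) 100 := by
          constructor
          · positivity
          · have h2 : ‖x - c i‖ ^ 2 ≤ 100 * r ^ 2 := by nlinarith [norm_nonneg (x - c i)]
            calc (r ^ 2)⁻¹ * ‖x - c i‖ ^ 2 ≤ (r ^ 2)⁻¹ * (100 * r ^ 2) :=
                  mul_le_mul_of_nonneg_left h2 (by positivity)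
              _ = 100 := by field_simp
        have hgc : ContDiff ℝ ((⊤:ℕ∞) : WithTop ℕ∞) fun y : H => (r ^ 2)⁻¹ * ‖y - c i‖ ^ 2 :=
          contDiff_const.mul ((contDiff_norm_sq ℝ).comp (contDiff_id.sub contDiff_const))
        have hC : ∀ a, a ≤ j →
            ‖iteratedFDeriv ℝ a spuTh ((fun y : H => (r ^ 2)⁻¹ * ‖y - c i‖ ^ 2) x)‖ ≤ Cθ :=
          fun a ha => hCθ a (ha.trans hj) _ hmemIcc
        have hD : ∀ a, 1 ≤ a → a ≤ j →
            ‖iteratedFDeriv ℝ a (fun y : H => (r ^ 2)⁻¹ * ‖y - c i‖ ^ 2) x‖ ≤ (20 / r) ^ a :=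
          fun a ha _ => spu_g_deriv_bound (c i) hr x hxn a ha
        have h := norm_iteratedFDeriv_comp_le (g := spuTh)
          (f := fun y : H => (r ^ 2)⁻¹ * ‖y - c i‖ ^ 2) spuTh_contDiff hgc
          (by exact_mod_cast le_top) x hC hD
        exact h
      · push_neg at hx
        have hev0 : ψ i =ᶠ[nhds x] fun _ => (0:ℝ) := by
          have hopen : IsOpen {y : H | 9 * r < dist y (c i)} :=
            isOpen_lt continuous_const (continuous_id.dist continuous_const)
          refine Filter.eventuallyEq_of_mem (hopen.mem_nhds ?_) fun y hy => hψ_zero i y hy.le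
          show 9 * r < dist x (c i)
          linarith
        rw [spu_iter_congr hev0 j]
        have h0 : ‖iteratedFDeriv ℝ j (fun _ : H => (0:ℝ)) x‖ = 0 := by
          cases j with
          | zero => simp
          | succ n =>
              rw [iteratedFDeriv_const_of_ne (Nat.succ_ne_zero n)]
              simp
        rw [h0]
        positivity
    -- bound for S derivatives
    have hS_bound : ∀ j, j ≤ m → ∀ x,
        ‖iteratedFDeriv ℝ j S x‖ ≤ Γ * (j.factorial * Cθ * (20 / r) ^ j) := by
      intro j hj x
      rw [hS_iter_eq x j]
      calc ‖∑ i ∈ s x, iteratedFDeriv ℝ j (ψ i) x‖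
          ≤ ∑ i ∈ s x, ‖iteratedFDeriv ℝ j (ψ i) x‖ := norm_sum_le _ _
        _ ≤ ∑ _i ∈ s x, (j.factorial * Cθ * (20 / r) ^ j) :=
            Finset.sum_le_sum fun i _ => hψ_bound j hj i x
        _ = ((s x).card : ℝ) * (j.factorial * Cθ * (20 / r) ^ j) := by
            rw [Finset.sum_const, nsmul_eq_mul]
        _ ≤ Γ * (j.factorial * Cθ * (20 / r) ^ j) :=
            mul_le_mul_of_nonneg_right (hcard x) (by positivity)
    have hS_bound' : ∀ j, 1 ≤ j → j ≤ m → ∀ x,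
        ‖iteratedFDeriv ℝ j S x‖ ≤ (K / r) ^ j := by
      intro j hj1 hj x
      have hfac : (j.factorial : ℝ) ≤ (m.factorial : ℝ) := by
        exact_mod_cast Nat.factorial_le hj
      have h1 : Γ * (j.factorial : ℝ) * Cθ ≤ M := by
        have h2 := mul_le_mul_of_nonneg_right
          (mul_le_mul_of_nonneg_left hfac hΓ0.le) (zero_le_one.trans hCθ1)
        rw [hMdef]
        linarith
      calc ‖iteratedFDeriv ℝ j S x‖ ≤ Γ * (j.factorial * Cθ * (20 / r) ^ j) := hS_bound j hj x
        _ = (Γ * j.factorial * Cθ) * (20 / r) ^ j := by ring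
        _ ≤ M ^ j * (20 / r) ^ j :=
            mul_le_mul_of_nonneg_right
              (h1.trans (le_self_pow₀ hM1 (by omega))) (by positivity)
        _ = (K / r) ^ j := by
            rw [← mul_pow]
            congr 1
            rw [hKdef]
            field_simp
    -- bound for v derivatives
    have hv_bound : ∀ j, j ≤ m → ∀ x,
        ‖iteratedFDeriv ℝ j v x‖ ≤ j.factorial * Cu * (K / r) ^ j := by
      intro j hj x
      have hC : ∀ a, a ≤ j → ‖iteratedFDeriv ℝ a spuU (S x)‖ ≤ Cu :=
        fun a ha => hCu a (ha.trans hj) _ ⟨hS_nonneg x, hS_le x⟩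
      have hD : ∀ a, 1 ≤ a → a ≤ j → ‖iteratedFDeriv ℝ a S x‖ ≤ (K / r) ^ a :=
        fun a ha1 ha => hS_bound' a ha1 (ha.trans hj) x
      exact norm_iteratedFDeriv_comp_le (g := spuU) (f := S) spuU_contDiff hS_cd
        (by exact_mod_cast le_top) x hC hD
    -- combine
    have hfacpos : (0:ℝ) < (m.factorial : ℝ) := by exact_mod_cast m.factorial_pos
    refine ⟨((m:ℝ) + 1) * m.factorial * Cθ * Cu * K ^ m, ?_, ?_⟩
    · have h1 : (0:ℝ) < Cθ := by linarith
      have h2 : (0:ℝ) < Cu := by linarith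
      have h3 : (0:ℝ) < K ^ m := pow_pos hK0 m
      positivity
    intro i x
    have h1 := norm_iteratedFDeriv_mul_le (𝕜 := ℝ) (f := ψ i) (g := v)
      (hψ_cd i) hv_cd x (n := m) (by exact_mod_cast le_top)
    refine h1.trans ?_
    have hterm : ∀ j ∈ Finset.range (m + 1),
        (m.choose j : ℝ) * ‖iteratedFDeriv ℝ j (ψ i) x‖ * ‖iteratedFDeriv ℝ (m - j) v x‖ ≤
          (m.factorial : ℝ) * Cθ * Cu * (K / r) ^ m := by
      intro j hj
      rw [Finset.mem_range, Nat.lt_succ_iff] at hj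
      have hbψ := hψ_bound j hj i x
      have hbv := hv_bound (m - j) (Nat.sub_le m j) x
      have hchoose : (m.choose j : ℝ) * (j.factorial : ℝ) * ((m - j).factorial : ℝ)
          = (m.factorial : ℝ) := by exact_mod_cast Nat.choose_mul_factorial_mul_factorial hj
      have hpow : (20 / r) ^ j * (K / r) ^ (m - j) ≤ (K / r) ^ m := by
        have hKr : (20 / r) ≤ K / r := by
          gcongr
        calc (20 / r) ^ j * (K / r) ^ (m - j) ≤ (K / r) ^ j * (K / r) ^ (m - j) := by
              apply mul_le_mul_of_nonneg_right (pow_le_pow_left₀ (by positivity) hKr j)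
              positivity
          _ = (K / r) ^ m := by rw [← pow_add]; congr 1; omega
      have hb1 : (m.choose j : ℝ) * ‖iteratedFDeriv ℝ j (ψ i) x‖ ≤
          (m.choose j : ℝ) * (j.factorial * Cθ * (20 / r) ^ j) :=
        mul_le_mul_of_nonneg_left hbψ (by positivity)
      have hnn : (0:ℝ) ≤ (m.choose j : ℝ) * (j.factorial * Cθ * (20 / r) ^ j) := by
        have : (0:ℝ) < Cθ := by linarith
        positivity
      calc (m.choose j : ℝ) * ‖iteratedFDeriv ℝ j (ψ i) x‖ * ‖iteratedFDeriv ℝ (m - j) v x‖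
          ≤ ((m.choose j : ℝ) * (j.factorial * Cθ * (20 / r) ^ j)) *
              ((m - j).factorial * Cu * (K / r) ^ (m - j)) :=
            mul_le_mul hb1 hbv (norm_nonneg _) hnn
        _ = ((m.choose j : ℝ) * j.factorial * (m - j).factorial) * Cθ * Cu *
              ((20 / r) ^ j * (K / r) ^ (m - j)) := by ring
        _ ≤ ((m.choose j : ℝ) * j.factorial * (m - j).factorial) * Cθ * Cu * (K / r) ^ m := by
            apply mul_le_mul_of_nonneg_left hpow
            have h1 : (0:ℝ) < Cθ := by linarith
            have h2 : (0:ℝ) < Cu := by linarith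
            positivity
        _ = (m.factorial : ℝ) * Cθ * Cu * (K / r) ^ m := by rw [hchoose]
    calc ∑ j ∈ Finset.range (m + 1),
          (m.choose j : ℝ) * ‖iteratedFDeriv ℝ j (ψ i) x‖ * ‖iteratedFDeriv ℝ (m - j) v x‖
        ≤ ∑ _j ∈ Finset.range (m + 1), (m.factorial : ℝ) * Cθ * Cu * (K / r) ^ m :=
          Finset.sum_le_sum hterm
      _ = ((m:ℝ) + 1) * ((m.factorial : ℝ) * Cθ * Cu * (K / r) ^ m) := by
          rw [Finset.sum_const, Finset.card_range, nsmul_eq_mul]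
          push_cast
          ring
      _ = ((m:ℝ) + 1) * m.factorial * Cθ * Cu * K ^ m / r ^ m := by
          rw [div_pow]
          ring
  -- assemble
  refine ⟨φ, hφ_cd, ?_, hφ01, ?_, ?_, hDB⟩
  · -- Lipschitz
    intro i
    obtain ⟨C, hC0, hC⟩ := hDB 1
    refine ⟨Real.toNNReal (C / r), ?_⟩
    apply lipschitzWith_of_nnnorm_fderiv_le ((hφ_cd i).differentiable (by simp))
    intro x
    have h1 : ‖fderiv ℝ (φ i) x‖ = ‖iteratedFDeriv ℝ 1 (φ i) x‖ := by
      rw [← norm_iteratedFDeriv_fderiv, norm_iteratedFDeriv_zero]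
    have h2 : ‖fderiv ℝ (φ i) x‖ ≤ C / r := by
      rw [h1]
      have := hC i x
      rwa [pow_one] at this
    rw [← norm_toNNReal]
    exact Real.toNNReal_mono h2
  · -- tsupport
    intro i
    refine (closure_minimal ?_ isClosed_closedBall).trans
      (closedBall_subset_closedBall (by linarith : 9 * r ≤ 10 * r))
    intro x hx
    rw [Function.mem_support] at hx
    have hne : ψ i x ≠ 0 := by
      intro h0
      apply hx
      rw [hφdef]
      simp [h0]
    exact mem_closedBall.mpr (hψ_supp i x hne).le
  · -- has sum
    intro x hx
    have h0 : ∀ i, i ∉ s x → φ i x = 0 := by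
      intro i hi
      have hψ0 : ψ i x = 0 := by
        by_contra hne
        exact hi ((hmem_s x i).mpr ((hψ_supp i x hne).le.trans (by linarith)))
      rw [hφdef]
      simp [hψ0]
    have h1 : HasSum (fun i => φ i x) (∑ i ∈ s x, φ i x) := hasSum_sum_of_ne_finset_zero h0
    have h2 : ∑ i ∈ s x, φ i x = 1 := by
      have hsum : ∑ i ∈ s x, φ i x = S x * v x := by
        rw [hφdef]
        rw [← Finset.sum_mul, ← hS_eq x x (hself x)]
      have hS1 : 1 ≤ S x := hS_ge1 x hx
      have hfx : spuF (S x) = S x := spuF_eq hS1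
      rw [hsum, hvdef]
      show S x * (spuF (S x))⁻¹ = 1
      rw [hfx]
      exact mul_inv_cancel₀ (by linarith)
    rwa [h2] at h1
end

section
/- Let 2 ≤ p < ∞ and let f : ℝ^d → ℝ^n be a function that is L-bi-Lipschitz onto its image. Then there are constants C_1 depending only on L (and d) and C_2 depending only on p such that for every ball B ⊆ ℝ^d: Ω_{f,∞}((1/2)B) ≤ C_1 Ω_{f,1}(B)^{1/(d+1)} and Ω_{f,1}(B) ≤ C_2 Ω_{f,p}(B); in particular Ω_{f,∞}((1/2)B) ≲_{L,p} Ω_{f,p}(B)^{1/(d+1)}. -/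
open Metric Set MeasureTheory
open scoped ENNReal NNReal Classical

/-- `Ω_{f,p}(B(z,r))`: the normalized `L^p`-distance of `f` to affine maps on the ball. -/
noncomputable def omegaP (d n : ℕ) (p : ℝ)
    (f : EuclideanSpace ℝ (Fin d) → EuclideanSpace ℝ (Fin n))
    (z : EuclideanSpace ℝ (Fin d)) (r : ℝ) : ℝ :=
  ⨅ A : EuclideanSpace ℝ (Fin d) →ᵃ[ℝ] EuclideanSpace ℝ (Fin n),
    (⨍ y in closedBall z r, (dist (f y) (A y) / r) ^ p) ^ (1 / p)

/-- `Ω_{f,∞}(B(z,r))`: the normalized uniform distance of `f` to affine maps on the ball. -/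
noncomputable def omegaInfty (d n : ℕ)
    (f : EuclideanSpace ℝ (Fin d) → EuclideanSpace ℝ (Fin n))
    (z : EuclideanSpace ℝ (Fin d)) (r : ℝ) : ℝ :=
  ⨅ A : EuclideanSpace ℝ (Fin d) →ᵃ[ℝ] EuclideanSpace ℝ (Fin n),
    ⨆ y ∈ closedBall z r, dist (f y) (A y) / r


noncomputable section OmegaAux

variable {d n : ℕ}

local notation "Ed" => EuclideanSpace ℝ (Fin d)
local notation "Fn" => EuclideanSpace ℝ (Fin n)

lemma nontrivE (hd : 1 ≤ d) : Nontrivial Ed := by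
  have h : Module.finrank ℝ Ed = d := finrank_euclideanSpace_fin
  have : 0 < Module.finrank ℝ Ed := by rw [h]; omega
  exact Module.nontrivial_of_finrank_pos this

lemma u_pos (hd : 1 ≤ d) : 0 < (volume (ball (0 : Ed) 1)).toReal := by
  have := nontrivE (d := d) hd
  exact ENNReal.toReal_pos (measure_ball_pos _ _ one_pos).ne' measure_ball_lt_top.ne

lemma volE (z : Ed) {r : ℝ} (hr : 0 ≤ r) :
    (volume (closedBall z r)).toReal = r ^ d * (volume (ball (0 : Ed) 1)).toReal := by
  rw [Measure.addHaar_closedBall _ _ hr, finrank_euclideanSpace_fin,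
    ENNReal.toReal_mul, ENNReal.toReal_ofReal (by positivity)]

lemma intOn {g : Ed → ℝ} (hg : Continuous g) (z : Ed) (r : ℝ) :
    IntegrableOn g (closedBall z r) volume :=
  hg.continuousOn.integrableOn_compact (isCompact_closedBall z r)

lemma img' (v c : Ed) (ρ : ℝ) :
    (fun x => x + v) '' closedBall c ρ = closedBall (c + v) ρ := by
  ext y
  constructor
  · rintro ⟨x, hx, rfl⟩
    simpa [mem_closedBall, dist_eq_norm, add_sub_add_right_eq_sub] using hx
  · intro hy
    refine ⟨y - v, ?_, by simp⟩
    simp only [mem_closedBall, dist_eq_norm] at hy ⊢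
    have : y - v - c = y - (c + v) := by abel
    rw [this]; exact hy

lemma transl (v c : Ed) (ρ : ℝ) (g : Ed → ℝ) :
    ∫ y in closedBall c ρ, g (y + v) = ∫ y in closedBall (c + v) ρ, g y := by
  have h := (measurePreserving_add_right (volume : Measure Ed) v).setIntegral_image_emb
    (measurableEmbedding_addRight v) g (closedBall c ρ)
  rw [← h, img']

/-- Lemma A: sup bound from average. -/
lemma supFromAvg (hd : 1 ≤ d) {g : Ed → ℝ} (hg0 : ∀ y, 0 ≤ g y) (hgc : Continuous g)
    {K : ℝ} (hK0 : 0 ≤ K) (hK : ∀ x y, g x ≤ g y + K * dist x y)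
    {z x : Ed} {r ρ : ℝ} (hr : 0 < r) (hx : x ∈ closedBall z (r/2))
    (hρ0 : 0 < ρ) (hρ : ρ ≤ r/2) :
    g x ≤ K * ρ + (r/ρ) ^ d * ⨍ y in closedBall z r, g y := by
  have hsub : closedBall x ρ ⊆ closedBall z r := by
    apply closedBall_subset_closedBall'
    have := mem_closedBall.1 hx
    linarith
  set u := (volume (ball (0 : Ed) 1)).toReal with hu
  have hu0 : 0 < u := u_pos hd
  have hm : (volume (closedBall x ρ)).toReal = ρ ^ d * u := volE x hρ0.le
  have hM : (volume (closedBall z r)).toReal = r ^ d * u := volE z hr.le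
  have hm0 : 0 < ρ ^ d * u := by positivity
  -- step 1: g x * m ≤ ∫_{B(x,ρ)} (g y + K ρ)
  have step1 : g x * (ρ ^ d * u) ≤ (∫ y in closedBall x ρ, g y) + K * ρ * (ρ ^ d * u) := by
    have h1 : ∫ (_ : Ed) in closedBall x ρ, g x = (volume (closedBall x ρ)).toReal • g x :=
      setIntegral_const (g x)
    have h2 : ∫ y in closedBall x ρ, (g y + K * ρ) ∂volume
        = (∫ y in closedBall x ρ, g y) + K * ρ * (ρ ^ d * u) := by
      rw [integral_add (intOn hgc x ρ) (integrableOn_const measure_closedBall_lt_top.ne)]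
      rw [setIntegral_const, measureReal_def, hm, smul_eq_mul, mul_comm]
    have h3 : ∫ (_ : Ed) in closedBall x ρ, g x ≤ ∫ y in closedBall x ρ, (g y + K * ρ) ∂volume := by
      apply setIntegral_mono_on (integrableOn_const measure_closedBall_lt_top.ne)
        ((intOn hgc x ρ).add (integrableOn_const measure_closedBall_lt_top.ne))
        measurableSet_closedBall
      intro y hy
      have h4 := hK x y
      have hd' : dist x y ≤ ρ := by
        rw [dist_comm]; exact mem_closedBall.1 hy
      have h5 : K * dist x y ≤ K * ρ := mul_le_mul_of_nonneg_left hd' hK0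
      show g x ≤ g y + K * ρ
      linarith
    rw [h1, hm, smul_eq_mul, mul_comm] at h3
    linarith [h3, h2 ▸ h3]
  -- step 2: ∫_{B(x,ρ)} g ≤ ∫_B g
  have step2 : (∫ y in closedBall x ρ, g y) ≤ ∫ y in closedBall z r, g y := by
    apply setIntegral_mono_set (intOn hgc z r) (Filter.Eventually.of_forall hg0)
    exact HasSubset.Subset.eventuallyLE hsub
  -- average
  have havg : (∫ y in closedBall z r, g y) = (r ^ d * u) * ⨍ y in closedBall z r, g y := by
    rw [setAverage_eq, measureReal_def, hM, smul_eq_mul]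
    rw [← mul_assoc, mul_inv_cancel₀ (by positivity), one_mul]
  have havg0 : 0 ≤ ⨍ y in closedBall z r, g y := by
    rw [setAverage_eq, smul_eq_mul]
    have : 0 ≤ ∫ y in closedBall z r, g y := setIntegral_nonneg measurableSet_closedBall (fun y _ => hg0 y)
    positivity
  have := step1.trans (by linarith : (∫ y in closedBall x ρ, g y) + K * ρ * (ρ ^ d * u)
      ≤ (r ^ d * u) * (⨍ y in closedBall z r, g y) + K * ρ * (ρ ^ d * u))
  -- divide by ρ^d u
  rw [div_pow]
  have hratio : (r ^ d * u) = (r ^ d / ρ ^ d) * (ρ ^ d * u) := by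
    field_simp
  calc g x = g x * (ρ ^ d * u) / (ρ ^ d * u) := by field_simp
    _ ≤ ((r ^ d * u) * (⨍ y in closedBall z r, g y) + K * ρ * (ρ ^ d * u)) / (ρ ^ d * u) := by
        exact div_le_div_of_nonneg_right this hm0.le
    _ = K * ρ + r ^ d / ρ ^ d * ⨍ y in closedBall z r, g y := by
        rw [hratio]; field_simp; ring

/-- Lemma B: bound on the linear part of a near-optimal affine map. -/
lemma linBound (hd : 1 ≤ d) {f : Ed → Fn} {L : ℝ} (hL : 0 ≤ L)
    (hf : ∀ x y, dist (f x) (f y) ≤ L * dist x y) (hfc : Continuous f)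
    (A : Ed →ᵃ[ℝ] Fn) {z : Ed} {r δ : ℝ} (hr : 0 < r) (hδ : 0 ≤ δ)
    (havg : (⨍ y in closedBall z r, dist (f y) (A y)) ≤ δ * r) :
    ∀ v : Ed, ‖A.linear v‖ ≤ (L + 4 ^ (d+1) * δ) * ‖v‖ := by
  set g : Ed → ℝ := fun y => dist (f y) (A y) with hg
  have hAc : Continuous A := A.continuous_of_finiteDimensional
  have hgc : Continuous g := hfc.dist hAc
  set u := (volume (ball (0 : Ed) 1)).toReal with hu
  have hu0 : 0 < u := u_pos hd
  -- first: vectors of norm r/2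
  have main : ∀ v : Ed, ‖v‖ = r / 2 → ‖A.linear v‖ ≤ (L + 4 ^ (d+1) * δ) * (r / 2) := by
    intro v hv
    set c : Ed := z - (2⁻¹ : ℝ) • v with hc
    have hm1 : (volume (closedBall c (r/4))).toReal = (r/4) ^ d * u := volE c (by positivity)
    have hm10 : 0 < (r/4) ^ d * u := by positivity
    have hsub1 : closedBall c (r/4) ⊆ closedBall z r := by
      apply closedBall_subset_closedBall'
      have : dist c z = r / 4 := by
        rw [dist_eq_norm, hc]
        simp only [sub_sub_cancel_left]
        rw [norm_neg, norm_smul, hv]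
        simp [abs_of_nonneg]
        ring
      rw [this]; linarith
    have hsub2 : closedBall (c + v) (r/4) ⊆ closedBall z r := by
      apply closedBall_subset_closedBall'
      have : dist (c + v) z = r / 4 := by
        rw [dist_eq_norm, hc]
        have : z - (2⁻¹ : ℝ) • v + v - z = (2⁻¹ : ℝ) • v := by
          module
        rw [this, norm_smul, hv]
        simp [abs_of_nonneg]
        ring
      rw [this]; linarith
    -- pointwise bound on B₁
    have hpt : ∀ y : Ed, ‖A.linear v‖ ≤ g (y + v) + (g y + L * (r/2)) := by
      intro y
      have h1 : A.linear v = A (y + v) - A y := by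
        have := A.linearMap_vsub (y + v) y
        simpa [vsub_eq_sub, add_sub_cancel_left] using this
      have h2 : ‖A.linear v‖ = dist (A (y+v)) (A y) := by rw [h1, dist_eq_norm]
      have h3 : dist (A (y+v)) (A y) ≤ dist (A (y+v)) (f (y+v)) + dist (f (y+v)) (f y)
          + dist (f y) (A y) := dist_triangle4 _ _ _ _
      have h4 : dist (f (y+v)) (f y) ≤ L * (r/2) := by
        have := hf (y+v) y
        have hdv : dist (y+v) y = r/2 := by
          rw [dist_eq_norm, add_sub_cancel_left, hv]
        rw [hdv] at this; exact this
      have h5 : dist (A (y+v)) (f (y+v)) = g (y+v) := dist_comm _ _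
      rw [h2]
      calc dist (A (y+v)) (A y) ≤ dist (A (y+v)) (f (y+v)) + dist (f (y+v)) (f y)
          + dist (f y) (A y) := h3
        _ ≤ g (y+v) + (g y + L * (r/2)) := by rw [h5]; simp only [hg]; linarith
    -- integrate
    have hint1 : IntegrableOn (fun y => g (y + v)) (closedBall c (r/4)) volume :=
      intOn (hgc.comp (continuous_id.add continuous_const)) c (r/4)
    have hint2 : IntegrableOn g (closedBall c (r/4)) volume := intOn hgc c (r/4)
    have hconst : IntegrableOn (fun _ : Ed => L * (r/2)) (closedBall c (r/4)) volume :=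
      integrableOn_const measure_closedBall_lt_top.ne
    have step : ‖A.linear v‖ * ((r/4) ^ d * u)
        ≤ (∫ y in closedBall c (r/4), g (y + v)) + ((∫ y in closedBall c (r/4), g y)
            + L * (r/2) * ((r/4) ^ d * u)) := by
      have e1 : ∫ (_ : Ed) in closedBall c (r/4), ‖A.linear v‖
          = ‖A.linear v‖ * ((r/4) ^ d * u) := by
        rw [setIntegral_const, measureReal_def, hm1, smul_eq_mul, mul_comm]
      have e2 : ∫ y in closedBall c (r/4), (g (y + v) + (g y + L * (r/2))) ∂volume
          = (∫ y in closedBall c (r/4), g (y + v)) + ((∫ y in closedBall c (r/4), g y)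
            + L * (r/2) * ((r/4) ^ d * u)) := by
        have hint23 : IntegrableOn (fun y => g y + L * (r/2)) (closedBall c (r/4)) volume :=
          hint2.add hconst
        rw [integral_add hint1 hint23, integral_add hint2 hconst,
          setIntegral_const, measureReal_def, hm1, smul_eq_mul, mul_comm]
      rw [← e1, ← e2]
      apply setIntegral_mono_on (integrableOn_const measure_closedBall_lt_top.ne)
        (hint1.add (hint2.add hconst)) measurableSet_closedBall
      intro y _
      exact hpt y
    -- translate & compare with big ball
    have hB : (∫ y in closedBall z r, g y) ≤ δ * r * (r ^ d * u) := by
      have : (∫ y in closedBall z r, g y)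
          = (volume (closedBall z r)).toReal * ⨍ y in closedBall z r, g y := by
        rw [setAverage_eq, measureReal_def, smul_eq_mul, ← mul_assoc,
          mul_inv_cancel₀ (by rw [volE z hr.le]; positivity), one_mul]
      rw [this, volE z hr.le]
      have h0 : (0:ℝ) ≤ r ^ d * u := by positivity
      calc (r ^ d * u) * ⨍ y in closedBall z r, g y ≤ (r ^ d * u) * (δ * r) :=
            mul_le_mul_of_nonneg_left havg h0
        _ = δ * r * (r ^ d * u) := by ring
    have t1 : (∫ y in closedBall c (r/4), g (y + v)) ≤ δ * r * (r ^ d * u) := by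
      rw [transl]
      refine (setIntegral_mono_set (intOn hgc z r)
        (Filter.Eventually.of_forall (fun y => dist_nonneg))
        (HasSubset.Subset.eventuallyLE hsub2)).trans hB
    have t2 : (∫ y in closedBall c (r/4), g y) ≤ δ * r * (r ^ d * u) := by
      refine (setIntegral_mono_set (intOn hgc z r)
        (Filter.Eventually.of_forall (fun y => dist_nonneg))
        (HasSubset.Subset.eventuallyLE hsub1)).trans hB
    -- combine and divide
    have final : ‖A.linear v‖ * ((r/4) ^ d * u)
        ≤ 2 * (δ * r * (r ^ d * u)) + L * (r/2) * ((r/4) ^ d * u) := by linarith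
    have hpow : (r:ℝ) ^ d = 4 ^ d * (r/4) ^ d := by
      rw [div_pow]; field_simp
    have final2 : ‖A.linear v‖ * ((r/4) ^ d * u)
        ≤ ((L + 4 ^ (d+1) * δ) * (r / 2)) * ((r/4) ^ d * u) := by
      calc ‖A.linear v‖ * ((r/4) ^ d * u)
          ≤ 2 * (δ * r * (r ^ d * u)) + L * (r/2) * ((r/4) ^ d * u) := final
        _ = ((L + 4 ^ (d+1) * δ) * (r / 2)) * ((r/4) ^ d * u) := by
            rw [hpow]; ring
    exact le_of_mul_le_mul_right final2 hm10
  -- now general v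
  intro v
  rcases eq_or_ne v 0 with rfl | hv0
  · simp
  · have hnv : 0 < ‖v‖ := norm_pos_iff.2 hv0
    set s : ℝ := (r/2) / ‖v‖ with hs
    have hs0 : 0 < s := by positivity
    have hw : ‖s • v‖ = r / 2 := by
      rw [norm_smul, Real.norm_of_nonneg hs0.le, hs]
      field_simp
    have := main (s • v) hw
    rw [LinearMap.map_smul, norm_smul, Real.norm_of_nonneg hs0.le] at this
    have hrw : (L + 4 ^ (d+1) * δ) * (r / 2) = (L + 4 ^ (d+1) * δ) * (s * ‖v‖) := by
      rw [hs]; field_simp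
    rw [hrw] at this
    have := le_of_mul_le_mul_left (by linarith [this] :
      s * ‖A.linear v‖ ≤ s * ((L + 4 ^ (d+1) * δ) * ‖v‖)) hs0
    exact this



lemma avg_nonneg' {g : Ed → ℝ} (hg : ∀ y, 0 ≤ g y) (z : Ed) (r : ℝ) :
    0 ≤ ⨍ y in closedBall z r, g y := by
  rw [setAverage_eq, smul_eq_mul]
  have h := setIntegral_nonneg (μ := (volume : Measure Ed)) (s := closedBall z r)
    measurableSet_closedBall (fun y (_ : y ∈ closedBall z r) => hg y)
  positivity

lemma omegaInfty_le_sup (f : Ed → Fn) (z : Ed) {s : ℝ} (hs : 0 ≤ s)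
    (A : Ed →ᵃ[ℝ] Fn) :
    omegaInfty d n f z s ≤ ⨆ y ∈ closedBall z s, dist (f y) (A y) / s := by
  apply ciInf_le _ A
  refine ⟨0, ?_⟩
  rintro x ⟨B, rfl⟩
  exact Real.iSup_nonneg fun y => Real.iSup_nonneg fun _ => div_nonneg dist_nonneg hs

lemma omegaInfty_le_L {L : ℝ} (hL : 0 ≤ L) {f : Ed → Fn}
    (hf : ∀ x y, dist (f x) (f y) ≤ L * dist x y) (z : Ed) {s : ℝ} (hs : 0 < s) :
    omegaInfty d n f z s ≤ L := by
  refine (omegaInfty_le_sup f z hs.le (AffineMap.const ℝ Ed (f z))).trans ?_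
  refine Real.iSup_le (fun y => Real.iSup_le (fun hy => ?_) hL) hL
  have h1 : dist (f y) ((AffineMap.const ℝ Ed (f z)) y) = dist (f y) (f z) := by simp
  rw [h1, div_le_iff₀ hs]
  calc dist (f y) (f z) ≤ L * dist y z := hf y z
    _ ≤ L * s := mul_le_mul_of_nonneg_left (mem_closedBall.1 hy) hL

/-- Key lemma: from an `L¹` bound `δ` for one affine map, get the sup bound `δ^(1/(d+1))`. -/
lemma key (hd : 1 ≤ d) {L : ℝ} (hL : 1 ≤ L) {f : Ed → Fn} (hfc : Continuous f)
    (hf : ∀ x y, dist (f x) (f y) ≤ L * dist x y)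
    (z : Ed) {r δ : ℝ} (hr : 0 < r) (hδ : 0 < δ)
    (A : Ed →ᵃ[ℝ] Fn) (havg : (⨍ y in closedBall z r, dist (f y) (A y)) ≤ δ * r) :
    omegaInfty d n f z (r/2) ≤ (2*L + 4^(d+1) + 2^(d+1)) * δ ^ (1/((d:ℝ)+1)) := by
  have hL0 : (0:ℝ) < L := by linarith
  have hα : 0 < 1/((d:ℝ)+1) := by positivity
  have h4p : (0:ℝ) < 4^(d+1) := by positivity
  have h2p : (0:ℝ) < 2^(d+1) := by positivity
  have hC0 : (0:ℝ) < 2*L + 4^(d+1) + 2^(d+1) := by linarith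
  by_cases hδ1 : 1 ≤ δ
  · have h1 : omegaInfty d n f z (r/2) ≤ L := omegaInfty_le_L hL0.le hf z (by linarith)
    have h2 : (1:ℝ) ≤ δ ^ (1/((d:ℝ)+1)) := by
      have := Real.rpow_le_rpow (by norm_num : (0:ℝ) ≤ 1) hδ1 hα.le
      simpa [Real.one_rpow] using this
    calc omegaInfty d n f z (r/2) ≤ L := h1
      _ ≤ (2*L + 4^(d+1) + 2^(d+1)) * 1 := by linarith
      _ ≤ _ := mul_le_mul_of_nonneg_left h2 hC0.le
  · push_neg at hδ1
    set g : Ed → ℝ := fun y => dist (f y) (A y) with hgdef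
    have hgc : Continuous g := hfc.dist A.continuous_of_finiteDimensional
    have hlin := linBound hd (le_trans zero_le_one hL) hf hfc A hr hδ.le havg
    set K : ℝ := 2*L + 4^(d+1)*δ with hKdef
    have hK0 : 0 ≤ K := by
      have : (0:ℝ) ≤ 4^(d+1)*δ := by positivity
      simp only [hKdef]; linarith
    have hglip : ∀ x y : Ed, g x ≤ g y + K * dist x y := by
      intro x y
      have h3 : dist (f x) (A x) ≤ dist (f x) (f y) + dist (f y) (A y) + dist (A y) (A x) :=
        dist_triangle4 _ _ _ _
      have h4 : dist (A y) (A x) = ‖A.linear (y - x)‖ := by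
        rw [dist_eq_norm]
        congr 1
        have := A.linearMap_vsub y x
        simp only [vsub_eq_sub] at this
        exact this.symm
      have h5 : ‖A.linear (y-x)‖ ≤ (L + 4^(d+1)*δ) * ‖y - x‖ := hlin _
      have h6 : ‖y - x‖ = dist x y := by rw [dist_comm, dist_eq_norm]
      have h7 : dist (f x) (f y) ≤ L * dist x y := hf x y
      have h5' : ‖A.linear (y - x)‖ ≤ (L + 4^(d+1)*δ) * dist x y := by
        rw [← h6]; exact h5
      have hsum : L * dist x y + (L + 4^(d+1)*δ) * dist x y = K * dist x y := by
        simp only [hKdef]; ring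
      simp only [hgdef]
      linarith [h3, h7, h5', hsum]
    set t : ℝ := δ ^ (1/((d:ℝ)+1)) with htdef
    have ht0 : 0 < t := Real.rpow_pos_of_pos hδ _
    have ht1 : t ≤ 1 := Real.rpow_le_one hδ.le hδ1.le hα.le
    set ρ : ℝ := (r/2) * t with hρdef
    have hρ0 : 0 < ρ := by positivity
    have hρle : ρ ≤ r/2 := by
      calc ρ = (r/2) * t := hρdef
        _ ≤ (r/2) * 1 := mul_le_mul_of_nonneg_left ht1 (by linarith)
        _ = r/2 := mul_one _
    have havg0 : 0 ≤ ⨍ y in closedBall z r, g y := avg_nonneg' (fun y => dist_nonneg) z r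
    have hts : δ = t * t^d := by
      have h1 : t^d = δ ^ ((1/((d:ℝ)+1)) * d) := by
        rw [htdef, ← Real.rpow_natCast (δ ^ (1/((d:ℝ)+1))) d, ← Real.rpow_mul hδ.le]
      have h2 : t * t^d = δ ^ ((1/((d:ℝ)+1)) + (1/((d:ℝ)+1)) * d) := by
        rw [h1, htdef, ← Real.rpow_add hδ]
      have h3 : (1/((d:ℝ)+1)) + (1/((d:ℝ)+1)) * d = 1 := by
        have : ((d:ℝ)+1) ≠ 0 := by positivity
        field_simp
        ring
      rw [h2, h3, Real.rpow_one]
    have hsup : ∀ x ∈ closedBall z (r/2),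
        g x / (r/2) ≤ (2*L + 4^(d+1) + 2^(d+1)) * t := by
      intro x hx
      have hA := supFromAvg hd (fun y => dist_nonneg) hgc hK0 hglip hr hx hρ0 hρle
      have hrρ : r / ρ = 2 / t := by
        rw [hρdef, div_eq_div_iff (by positivity) ht0.ne']
        ring
      have h8 : (r/ρ)^d * (⨍ y in closedBall z r, g y) ≤ (2/t)^d * (δ*r) := by
        rw [hrρ]
        exact mul_le_mul_of_nonneg_left havg (by positivity)
      have h9 : g x ≤ K*((r/2)*t) + (2/t)^d * (δ*r) := by
        rw [← hρdef]; linarith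
      have h10 : (2/t)^d * (δ*r) = 2^(d+1) * t * (r/2) := by
        rw [hts, div_pow, pow_succ]
        field_simp
      have hKle : K ≤ 2*L + 4^(d+1) := by
        have : (4:ℝ)^(d+1)*δ ≤ 4^(d+1) := by nlinarith
        simp only [hKdef]; linarith
      have h11 : K*((r/2)*t) ≤ (2*L + 4^(d+1)) * t * (r/2) := by
        have h12 : 0 ≤ (r/2)*t := by positivity
        calc K*((r/2)*t) ≤ (2*L + 4^(d+1))*((r/2)*t) :=
              mul_le_mul_of_nonneg_right hKle h12
          _ = (2*L + 4^(d+1)) * t * (r/2) := by ring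
      have hr2 : (0:ℝ) < r/2 := by linarith
      rw [div_le_iff₀ hr2]
      calc g x ≤ K*((r/2)*t) + (2/t)^d * (δ*r) := h9
        _ ≤ (2*L + 4^(d+1)) * t * (r/2) + 2^(d+1) * t * (r/2) := by rw [h10]; linarith
        _ = (2*L + 4^(d+1) + 2^(d+1)) * t * (r/2) := by ring
    refine (omegaInfty_le_sup f z (by linarith : (0:ℝ) ≤ r/2) A).trans ?_
    have hCt : 0 ≤ (2*L + 4^(d+1) + 2^(d+1)) * t := mul_nonneg hC0.le ht0.le
    exact Real.iSup_le (fun y => Real.iSup_le (fun hy => hsup y hy) hCt) hCt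

/-- Jensen: `Ω_{f,1} ≤ Ω_{f,p}` for `1 ≤ p`. -/
lemma omegaP_one_le {p : ℝ} (hp : 1 ≤ p) {f : Ed → Fn} (hfc : Continuous f)
    (z : Ed) {r : ℝ} (hr : 0 < r) :
    omegaP d n 1 f z r ≤ omegaP d n p f z r := by
  have hp0 : (0:ℝ) < p := lt_of_lt_of_le one_pos hp
  apply ciInf_mono
  · refine ⟨0, ?_⟩
    rintro x ⟨A, rfl⟩
    exact Real.rpow_nonneg
      (avg_nonneg' (fun y => Real.rpow_nonneg (div_nonneg dist_nonneg hr.le) _) z r) _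
  · intro A
    haveI : IsFiniteMeasure (volume.restrict (closedBall z r)) :=
      ⟨by rw [Measure.restrict_apply_univ]; exact measure_closedBall_lt_top⟩
    haveI : NeZero (volume.restrict (closedBall z r)) := by
      refine ⟨?_⟩
      rw [Ne, Measure.restrict_eq_zero]
      exact (measure_closedBall_pos volume z hr).ne'
    set h : Ed → ℝ := fun y => dist (f y) (A y) / r with hhdef
    have hhc : Continuous h := (hfc.dist A.continuous_of_finiteDimensional).div_const r
    have hh0 : ∀ y, 0 ≤ h y := fun y => div_nonneg dist_nonneg hr.le
    have hpc : Continuous fun x : ℝ => x ^ p :=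
      continuous_id.rpow_const fun x => Or.inr hp0.le
    have jensen := (convexOn_rpow hp).map_average_le
      (μ := (volume : Measure Ed).restrict (closedBall z r)) hpc.continuousOn isClosed_Ici
      (Filter.Eventually.of_forall fun y => hh0 y)
      (hhc.continuousOn.integrableOn_compact (isCompact_closedBall z r))
      ((hpc.comp hhc).continuousOn.integrableOn_compact (isCompact_closedBall z r))
    have h0 : 0 ≤ ⨍ y in closedBall z r, h y := avg_nonneg' hh0 z r
    have e1 : (⨍ y in closedBall z r, (dist (f y) (A y) / r) ^ (1:ℝ)) ^ ((1:ℝ)/1)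
        = ⨍ y in closedBall z r, h y := by
      rw [show ((1:ℝ)/1) = 1 by norm_num, Real.rpow_one]
      congr 1
      ext y
      rw [Real.rpow_one]
    have e2 : ⨍ y in closedBall z r, h y
        = ((⨍ y in closedBall z r, h y) ^ p) ^ ((1:ℝ)/p) := by
      rw [← Real.rpow_mul h0, mul_one_div_cancel hp0.ne', Real.rpow_one]
    rw [e1, e2]
    exact Real.rpow_le_rpow (Real.rpow_nonneg h0 p) jensen (by positivity)

end OmegaAux

/-- **Lemma 4.3.** Let `2 ≤ p < ∞` and `f : ℝ^d → ℝ^n` be `L`-bi-Lipschitz onto its image.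
Then `Ω_{f,∞}(½B) ≲_L Ω_{f,1}(B)^{1/(d+1)}` and `Ω_{f,1}(B) ≲_p Ω_{f,p}(B)`; in particular
`Ω_{f,∞}(½B) ≲_{L,p} Ω_{f,p}(B)^{1/(d+1)}`. -/
theorem omega_infty_le_omega_p
    (d n : ℕ) (hd : 1 ≤ d) (p L : ℝ) (hp : 2 ≤ p) (hL : 1 ≤ L) :
    ∃ C₁ C₂ C₃ : ℝ, 0 < C₁ ∧ 0 < C₂ ∧ 0 < C₃ ∧
      ∀ f : EuclideanSpace ℝ (Fin d) → EuclideanSpace ℝ (Fin n),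
        (∀ x y, dist x y / L ≤ dist (f x) (f y) ∧ dist (f x) (f y) ≤ L * dist x y) →
        ∀ (z : EuclideanSpace ℝ (Fin d)) (r : ℝ), 0 < r →
          omegaInfty d n f z (r / 2) ≤ C₁ * omegaP d n 1 f z r ^ (1 / ((d : ℝ) + 1)) ∧
          omegaP d n 1 f z r ≤ C₂ * omegaP d n p f z r ∧
          omegaInfty d n f z (r / 2) ≤ C₃ * omegaP d n p f z r ^ (1 / ((d : ℝ) + 1)) := by
  classical
  refine ⟨2*L + 4^(d+1) + 2^(d+1), 1, 2*L + 4^(d+1) + 2^(d+1), ?_, one_pos, ?_, ?_⟩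
  · have h4p : (0:ℝ) < 4^(d+1) := by positivity
    have h2p : (0:ℝ) < 2^(d+1) := by positivity
    linarith
  · have h4p : (0:ℝ) < 4^(d+1) := by positivity
    have h2p : (0:ℝ) < 2^(d+1) := by positivity
    linarith
  intro f hbi z r hr
  have hL0 : (0:ℝ) < L := by linarith
  have hfl : ∀ x y, dist (f x) (f y) ≤ L * dist x y := fun x y => (hbi x y).2
  have hfc : Continuous f := by
    have : LipschitzWith (Real.toNNReal L) f := by
      apply LipschitzWith.of_dist_le_mul
      intro x y
      rw [Real.coe_toNNReal L hL0.le]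
      exact hfl x y
    exact this.continuous
  have hα : 0 < 1/((d:ℝ)+1) := by positivity
  set C : ℝ := 2*L + 4^(d+1) + 2^(d+1) with hCdef
  have hC0 : (0:ℝ) < C := by
    have h4p : (0:ℝ) < 4^(d+1) := by positivity
    have h2p : (0:ℝ) < 2^(d+1) := by positivity
    simp only [hCdef]; linarith
  set ω1 := omegaP d n 1 f z r with hω1def
  have hω1 : 0 ≤ ω1 := by
    apply Real.iInf_nonneg
    intro A
    exact Real.rpow_nonneg
      (avg_nonneg' (fun y => Real.rpow_nonneg (div_nonneg dist_nonneg hr.le) _) z r) _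
  have hωp : 0 ≤ omegaP d n p f z r := by
    apply Real.iInf_nonneg
    intro A
    exact Real.rpow_nonneg
      (avg_nonneg' (fun y => Real.rpow_nonneg (div_nonneg dist_nonneg hr.le) _) z r) _
  -- the first inequality, with an epsilon of room
  have hstep : ∀ ε : ℝ, 0 < ε →
      omegaInfty d n f z (r/2) ≤ C * (ω1 + ε) ^ (1/((d:ℝ)+1)) := by
    intro ε hε
    obtain ⟨A, hA⟩ := exists_lt_of_ciInf_lt (show ω1 < ω1 + ε by linarith)
    have e1 : (⨍ y in closedBall z r, (dist (f y) (A y) / r) ^ (1:ℝ)) ^ ((1:ℝ)/1)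
        = ⨍ y in closedBall z r, dist (f y) (A y) / r := by
      rw [show ((1:ℝ)/1) = 1 by norm_num, Real.rpow_one]
      congr 1
      ext y
      rw [Real.rpow_one]
    rw [e1] at hA
    have e2 : ⨍ y in closedBall z r, dist (f y) (A y)
        = (⨍ y in closedBall z r, dist (f y) (A y) / r) * r := by
      rw [setAverage_eq, setAverage_eq, integral_div, smul_eq_mul, smul_eq_mul]
      field_simp
    have havg : (⨍ y in closedBall z r, dist (f y) (A y)) ≤ (ω1 + ε) * r := by
      rw [e2]
      exact mul_le_mul_of_nonneg_right hA.le hr.le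
    exact key hd hL hfc hfl z hr (by linarith) A havg
  have h1 : omegaInfty d n f z (r / 2) ≤ C * ω1 ^ (1/((d:ℝ)+1)) := by
    have tends : Filter.Tendsto (fun ε : ℝ => C * (ω1 + ε) ^ (1/((d:ℝ)+1)))
        (nhdsWithin (0:ℝ) (Ioi 0)) (nhds (C * ω1 ^ (1/((d:ℝ)+1)))) := by
      have hadd : Filter.Tendsto (fun ε : ℝ => ω1 + ε) (nhdsWithin (0:ℝ) (Ioi 0))
          (nhds ω1) := by
        have h : Filter.Tendsto (fun ε : ℝ => ω1 + ε) (nhds 0) (nhds (ω1 + 0)) :=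
          Filter.Tendsto.add tendsto_const_nhds Filter.tendsto_id
        rw [add_zero] at h
        exact h.mono_left nhdsWithin_le_nhds
      have hrpow : Filter.Tendsto (fun x : ℝ => x ^ (1/((d:ℝ)+1))) (nhds ω1)
          (nhds (ω1 ^ (1/((d:ℝ)+1)))) :=
        (Real.continuousAt_rpow_const ω1 _ (Or.inr hα.le)).tendsto
      exact (hrpow.comp hadd).const_mul C
    refine ge_of_tendsto tends ?_
    filter_upwards [self_mem_nhdsWithin] with ε hε
    exact hstep ε hε
  have h2 : ω1 ≤ omegaP d n p f z r := omegaP_one_le (by linarith) hfc z hr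
  refine ⟨h1, by rw [one_mul]; exact h2, ?_⟩
  calc omegaInfty d n f z (r / 2) ≤ C * ω1 ^ (1/((d:ℝ)+1)) := h1
    _ ≤ C * (omegaP d n p f z r) ^ (1/((d:ℝ)+1)) :=
        mul_le_mul_of_nonneg_left (Real.rpow_le_rpow hω1 h2 hα.le) hC0.le
end

section
/- Let H be a real separable Hilbert space and d ≥ 1. There is an absolute constant C such that the following holds for all ε > 0. Let P, P' be d-planes in H, x ∈ P, and B a ball centred at x with d_B(P,P') ≤ ε. Let P'' be the d-plane parallel to P' that contains x. Then for every A > 0: d_{AB}(P, P'') ≤ Cε and d_{AB}(P, P') ≤ Cε (1 + 1/A), where AB is the ball with the same centre as B and radius A times that of B. -/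
open Metric Set MeasureTheory
open scoped ENNReal NNReal Classical

set_option maxHeartbeats 1000000
section AuxLemmas

variable {H : Type*} [NormedAddCommGroup H] [InnerProductSpace ℝ H]

lemma aux_infDist_translate (c z : H) (s : Set H) :
    Metric.infDist z ((fun w => c + w) '' s) = Metric.infDist (z - c) s := by
  have hiso : Isometry (fun w : H => c + w) := Isometry.of_dist_eq (fun a b => by
    simp [dist_eq_norm])
  have h : z = (fun w : H => c + w) (z - c) := by simp
  conv_lhs => rw [h]
  exact Metric.infDist_image hiso

lemma aux_mem_translate {c z : H} {W : Submodule ℝ H} :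
    z ∈ (fun w => c + w) '' (W : Set H) ↔ z - c ∈ W := by
  constructor
  · rintro ⟨w, hw, rfl⟩; simpa using hw
  · intro h; exact ⟨z - c, h, by simp⟩

lemma aux_infDist_eq_norm (W : Submodule ℝ H) [W.HasOrthogonalProjection] (v : H) :
    Metric.infDist v (W : Set H) = ‖v - (Submodule.orthogonalProjection W v : H)‖ := by
  rw [Metric.infDist_eq_iInf, ← Submodule.starProjection_apply, Submodule.starProjection_minimal]
  simp_rw [dist_eq_norm]
  rfl

lemma aux_infDist_add (W : Submodule ℝ H) [W.HasOrthogonalProjection] (a b : H) :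
    Metric.infDist (a + b) (W : Set H) ≤
      Metric.infDist a (W : Set H) + Metric.infDist b (W : Set H) := by
  rw [aux_infDist_eq_norm, aux_infDist_eq_norm, aux_infDist_eq_norm, map_add]
  calc ‖a + b - ((Submodule.orthogonalProjection W a : H) + (Submodule.orthogonalProjection W b : H))‖
      = ‖(a - (Submodule.orthogonalProjection W a : H)) + (b - (Submodule.orthogonalProjection W b : H))‖ := by
        congr 1; abel
    _ ≤ _ := norm_add_le _ _

lemma aux_infDist_smul (W : Submodule ℝ H) [W.HasOrthogonalProjection] (t : ℝ) (a : H) :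
    Metric.infDist (t • a) (W : Set H) = |t| * Metric.infDist a (W : Set H) := by
  rw [aux_infDist_eq_norm, aux_infDist_eq_norm, (Submodule.orthogonalProjection W).map_smul]
  rw [show t • a - ((t • Submodule.orthogonalProjection W a : W) : H)
      = t • (a - (Submodule.orthogonalProjection W a : H)) by simp [smul_sub]]
  rw [norm_smul, Real.norm_eq_abs]

lemma aux_infDist_le_norm (W : Submodule ℝ H) (a : H) :
    Metric.infDist a (W : Set H) ≤ ‖a‖ := by
  simpa using Metric.infDist_le_dist_of_mem (W.zero_mem)

lemma aux_infDist_neg (W : Submodule ℝ H) [W.HasOrthogonalProjection] (a : H) :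
    Metric.infDist (-a) (W : Set H) = Metric.infDist a (W : Set H) := by
  simpa using aux_infDist_smul W (-1) a

lemma aux_biSup_le {S F : Set H} {a : ℝ} (ha : 0 ≤ a)
    (h : ∀ z ∈ S, Metric.infDist z F ≤ a) :
    (⨆ z ∈ S, Metric.infDist z F) ≤ a :=
  Real.iSup_le (fun z => Real.iSup_le (fun hz => h z hz) ha) ha

lemma aux_le_biSup {S F : Set H} {M : ℝ} (hM : ∀ z ∈ S, Metric.infDist z F ≤ M)
    {y : H} (hy : y ∈ S) :
    Metric.infDist y F ≤ ⨆ z ∈ S, Metric.infDist z F := by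
  have hb : BddAbove (Set.range fun z : H => ⨆ _ : z ∈ S, Metric.infDist z F) := by
    refine ⟨max M 0, ?_⟩
    rintro _ ⟨z, rfl⟩
    by_cases hz : z ∈ S
    · show (⨆ _ : z ∈ S, Metric.infDist z F) ≤ max M 0
      rw [ciSup_pos hz]; exact le_max_of_le_left (hM z hz)
    · show (⨆ _ : z ∈ S, Metric.infDist z F) ≤ max M 0
      haveI : IsEmpty (z ∈ S) := ⟨hz⟩
      rw [Real.iSup_of_isEmpty]
      exact le_max_right _ _
  have h := le_ciSup hb y
  rwa [ciSup_pos hy] at h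

lemma aux_dBall_le {x : H} {r c : ℝ} {E F : Set H} (hr : 0 < r) (hc : 0 ≤ c)
    (h1 : ∀ z ∈ E ∩ Metric.closedBall x r, Metric.infDist z F ≤ c * r)
    (h2 : ∀ z ∈ F ∩ Metric.closedBall x r, Metric.infDist z E ≤ c * r) :
    dBall x r E F ≤ c := by
  unfold dBall
  rw [inv_mul_le_iff₀ hr, mul_comm]
  exact max_le (aux_biSup_le (by positivity) h1) (aux_biSup_le (by positivity) h2)

lemma aux_dBall_extract₁ {x : H} {r ε : ℝ} {E F : Set H} (hr : 0 < r)
    (hd : dBall x r E F ≤ ε) :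
    ∀ z ∈ E ∩ Metric.closedBall x r, Metric.infDist z F ≤ ε * r := by
  have hM : ∀ z ∈ E ∩ Metric.closedBall x r, Metric.infDist z F ≤ Metric.infDist x F + r := by
    intro z hz
    have h1 : dist z x ≤ r := Metric.mem_closedBall.mp hz.2
    have h2 := Metric.infDist_le_infDist_add_dist (x := z) (y := x) (s := F)
    linarith
  intro z hz
  have hs : (⨆ z ∈ E ∩ Metric.closedBall x r, Metric.infDist z F) ≤ ε * r := by
    have h := hd
    unfold dBall at h
    rw [inv_mul_le_iff₀ hr, mul_comm] at h
    exact le_trans (le_max_left _ _) h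
  exact (aux_le_biSup hM hz).trans hs

lemma aux_dBall_extract₂ {x : H} {r ε : ℝ} {E F : Set H} (hr : 0 < r)
    (hd : dBall x r E F ≤ ε) :
    ∀ z ∈ F ∩ Metric.closedBall x r, Metric.infDist z E ≤ ε * r := by
  have hM : ∀ z ∈ F ∩ Metric.closedBall x r, Metric.infDist z E ≤ Metric.infDist x E + r := by
    intro z hz
    have h1 : dist z x ≤ r := Metric.mem_closedBall.mp hz.2
    have h2 := Metric.infDist_le_infDist_add_dist (x := z) (y := x) (s := E)
    linarith
  intro z hz
  have hs : (⨆ z ∈ F ∩ Metric.closedBall x r, Metric.infDist z E) ≤ ε * r := by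
    have h := hd
    unfold dBall at h
    rw [inv_mul_le_iff₀ hr, mul_comm] at h
    exact le_trans (le_max_right _ _) h
  exact (aux_le_biSup hM hz).trans hs

lemma aux_scale {W V : Submodule ℝ H} [W.HasOrthogonalProjection] {c r : ℝ}
    (hr : 0 < r) (hc : 0 ≤ c)
    (h : ∀ v ∈ V, ‖v‖ ≤ r → Metric.infDist v (W : Set H) ≤ c * r) :
    ∀ v ∈ V, Metric.infDist v (W : Set H) ≤ c * ‖v‖ := by
  intro v hv
  rcases eq_or_ne v 0 with rfl | hne
  · simp [Metric.infDist_zero_of_mem W.zero_mem]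
  · have hn : 0 < ‖v‖ := norm_pos_iff.mpr hne
    have htpos : 0 < r / ‖v‖ := div_pos hr hn
    have h1 : Metric.infDist ((r / ‖v‖) • v) (W : Set H) ≤ c * r := by
      refine h _ (V.smul_mem _ hv) ?_
      rw [norm_smul, Real.norm_eq_abs, abs_of_pos htpos]
      rw [div_mul_cancel₀ _ hn.ne']
    rw [aux_infDist_smul, abs_of_pos htpos] at h1
    have h2 : Metric.infDist v (W : Set H)
        = ‖v‖ / r * (r / ‖v‖ * Metric.infDist v (W : Set H)) := by
      field_simp
    rw [h2]
    calc ‖v‖ / r * (r / ‖v‖ * Metric.infDist v (W : Set H))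
        ≤ ‖v‖ / r * (c * r) := by
          exact mul_le_mul_of_nonneg_left h1 (by positivity)
      _ = c * ‖v‖ := by field_simp

end AuxLemmas

/-- **Lemma A.1.** There is an absolute constant `C` such that the following holds for
all `ε > 0`. Let `P, P'` be `d`-planes in `H` with `x ∈ P`, let `B = B(x,r)` satisfy
`d_B(P,P') ≤ ε`, and let `P''` be the `d`-plane parallel to `P'` containing `x` (here
`P' = y + W` and `P'' = x + W` for a `d`-dimensional subspace `W`). Then for every `A > 0`:
`d_{AB}(P,P'') ≤ Cε` and `d_{AB}(P,P') ≤ Cε(1 + 1/A)`. -/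
theorem dBall_parallel_planes
    {H : Type*} [NormedAddCommGroup H] [InnerProductSpace ℝ H]
    [CompleteSpace H] [TopologicalSpace.SeparableSpace H]
    (d : ℕ) (hd : 1 ≤ d) :
    ∃ C : ℝ, 0 < C ∧
      ∀ ε : ℝ, 0 < ε →
      ∀ (P : Set H) (x : H) (r : ℝ) (W : Submodule ℝ H) (y : H),
        0 < r → IsDPlane d P → x ∈ P → Module.finrank ℝ W = d →
        dBall x r P ((fun w => y + w) '' (W : Set H)) ≤ ε →
        ∀ A : ℝ, 0 < A →
          dBall x (A * r) P ((fun w => x + w) '' (W : Set H)) ≤ C * ε ∧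
          dBall x (A * r) P ((fun w => y + w) '' (W : Set H)) ≤ C * ε * (1 + 1 / A) := by
  classical
  refine ⟨4, by norm_num, ?_⟩
  intro ε hε P x r W y hr hP hx hWrank hdb A hA
  obtain ⟨x₀, V, hVrank, rfl⟩ := hP
  haveI : FiniteDimensional ℝ V := Module.finite_of_finrank_pos (by omega)
  haveI : FiniteDimensional ℝ W := Module.finite_of_finrank_pos (by omega)
  have hx' : x - x₀ ∈ V := aux_mem_translate.mp hx
  have hPx : (fun w => x₀ + w) '' (V : Set H) = (fun w => x + w) '' (V : Set H) := by
    ext z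
    simp only [aux_mem_translate]
    constructor
    · intro h
      have h2 : z - x = (z - x₀) - (x - x₀) := by abel
      rw [h2]; exact V.sub_mem h hx'
    · intro h
      have h2 : z - x₀ = (z - x) + (x - x₀) := by abel
      rw [h2]; exact V.add_mem h hx'
  rw [hPx] at hdb ⊢
  have hAr : 0 < A * r := mul_pos hA hr
  have hxPV : x ∈ (fun w => x + w) '' (V : Set H) :=
    aux_mem_translate.mpr (by simpa using V.zero_mem)
  have hxPW : x ∈ (fun w => x + w) '' (W : Set H) :=
    aux_mem_translate.mpr (by simpa using W.zero_mem)
  have hxB : x ∈ Metric.closedBall x r := Metric.mem_closedBall_self hr.le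
  have hex1 := aux_dBall_extract₁ hr hdb
  have hex2 := aux_dBall_extract₂ hr hdb
  have h_u : Metric.infDist (x - y) (W : Set H) ≤ ε * r := by
    have h := hex1 x ⟨hxPV, hxB⟩
    rwa [aux_infDist_translate] at h
  have hVW : ∀ v ∈ V, Metric.infDist v (W : Set H) ≤ (2 * ε) * ‖v‖ := by
    apply aux_scale hr (by positivity)
    intro v hv hnv
    have hmem : x + v ∈ ((fun w => x + w) '' (V : Set H)) ∩ Metric.closedBall x r := by
      refine ⟨⟨v, hv, rfl⟩, ?_⟩
      rw [Metric.mem_closedBall, dist_eq_norm]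
      simpa using hnv
    have h1 := hex1 _ hmem
    rw [aux_infDist_translate] at h1
    have h2 : Metric.infDist v (W : Set H)
        ≤ Metric.infDist (x + v - y) (W : Set H) + Metric.infDist (-(x - y)) (W : Set H) := by
      have h3 := aux_infDist_add W (x + v - y) (-(x - y))
      rw [show x + v - y + -(x - y) = v by abel] at h3
      exact h3
    rw [aux_infDist_neg] at h2
    nlinarith
  by_cases hcase : ε < 1/2
  · -- main case
    set pu := (Submodule.orthogonalProjection W (x - y) : H) with hpu
    have hpuW : pu ∈ W := (Submodule.orthogonalProjection W (x - y)).2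
    have huperp : ‖(x - y) - pu‖ ≤ ε * r := by
      rw [hpu, ← aux_infDist_eq_norm]; exact h_u
    have hWV : ∀ w ∈ W, Metric.infDist w (V : Set H) ≤ (4 * ε) * ‖w‖ := by
      apply aux_scale (show (0:ℝ) < r/2 by linarith) (by positivity)
      intro w hw hnw
      have hqmem : y + (pu + w) ∈ (fun w => y + w) '' (W : Set H) :=
        ⟨pu + w, W.add_mem hpuW hw, rfl⟩
      have hqball : y + (pu + w) ∈ Metric.closedBall x r := by
        rw [Metric.mem_closedBall, dist_eq_norm]
        rw [show y + (pu + w) - x = w - ((x - y) - pu) by abel]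
        calc ‖w - ((x - y) - pu)‖ ≤ ‖w‖ + ‖(x - y) - pu‖ := norm_sub_le _ _
          _ ≤ r/2 + ε * r := by linarith
          _ ≤ r := by nlinarith
      have h1 := hex2 _ ⟨hqmem, hqball⟩
      rw [aux_infDist_translate] at h1
      rw [show y + (pu + w) - x = w - ((x - y) - pu) by abel] at h1
      have h2 : Metric.infDist w (V : Set H)
          ≤ Metric.infDist (w - ((x - y) - pu)) (V : Set H)
            + Metric.infDist ((x - y) - pu) (V : Set H) := by
        have h3 := aux_infDist_add V (w - ((x - y) - pu)) ((x - y) - pu)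
        rw [show w - ((x - y) - pu) + ((x - y) - pu) = w by abel] at h3
        exact h3
      have h3 : Metric.infDist ((x - y) - pu) (V : Set H) ≤ ε * r :=
        le_trans (aux_infDist_le_norm V _) huperp
      nlinarith
    constructor
    · -- d_{AB}(P, P'') ≤ 4ε
      apply aux_dBall_le hAr (by positivity)
      · rintro z ⟨hzP, hzB⟩
        have hzV : z - x ∈ V := aux_mem_translate.mp hzP
        rw [aux_infDist_translate]
        have hb : ‖z - x‖ ≤ A * r := by
          rw [← dist_eq_norm]; exact Metric.mem_closedBall.mp hzB
        have := hVW _ hzV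
        nlinarith
      · rintro z ⟨hzP, hzB⟩
        have hzW : z - x ∈ W := aux_mem_translate.mp hzP
        rw [aux_infDist_translate]
        have hb : ‖z - x‖ ≤ A * r := by
          rw [← dist_eq_norm]; exact Metric.mem_closedBall.mp hzB
        have := hWV _ hzW
        nlinarith
    · -- d_{AB}(P, P') ≤ 4ε(1+1/A)
      have hgoal : 4 * ε * (1 + 1/A) * (A * r) = 4 * ε * (A * r) + 4 * ε * r := by
        field_simp
      apply aux_dBall_le hAr (by positivity)
      · rintro z ⟨hzP, hzB⟩
        have hzV : z - x ∈ V := aux_mem_translate.mp hzP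
        rw [aux_infDist_translate]
        have hb : ‖z - x‖ ≤ A * r := by
          rw [← dist_eq_norm]; exact Metric.mem_closedBall.mp hzB
        have h1 : Metric.infDist (z - y) (W : Set H)
            ≤ Metric.infDist (z - x) (W : Set H) + Metric.infDist (x - y) (W : Set H) := by
          have h3 := aux_infDist_add W (z - x) (x - y)
          rw [show z - x + (x - y) = z - y by abel] at h3
          exact h3
        have h2 := hVW _ hzV
        rw [hgoal]
        nlinarith
      · rintro z ⟨hzP, hzB⟩
        have hzW : z - y ∈ W := aux_mem_translate.mp hzP
        rw [aux_infDist_translate]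
        have hb : ‖z - x‖ ≤ A * r := by
          rw [← dist_eq_norm]; exact Metric.mem_closedBall.mp hzB
        have h1 : Metric.infDist (z - y - pu) (V : Set H) ≤ 4 * ε * ‖z - y - pu‖ :=
          hWV _ (W.sub_mem hzW hpuW)
        have h2 : ‖z - y - pu‖ ≤ A * r + ε * r := by
          rw [show z - y - pu = (z - x) + ((x - y) - pu) by abel]
          calc ‖(z - x) + ((x - y) - pu)‖ ≤ ‖z - x‖ + ‖(x - y) - pu‖ := norm_add_le _ _
            _ ≤ A * r + ε * r := by linarith
        have h3 : Metric.infDist (-((x - y) - pu)) (V : Set H) ≤ ε * r := by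
          rw [aux_infDist_neg]
          exact le_trans (aux_infDist_le_norm V _) huperp
        have h4 : Metric.infDist (z - x) (V : Set H)
            ≤ Metric.infDist (z - y - pu) (V : Set H)
              + Metric.infDist (-((x - y) - pu)) (V : Set H) := by
          have h5 := aux_infDist_add V (z - y - pu) (-((x - y) - pu))
          rw [show z - y - pu + -((x - y) - pu) = z - x by abel] at h5
          exact h5
        rw [hgoal]
        have h5 : 4 * ε * ‖z - y - pu‖ ≤ 4 * ε * (A * r + ε * r) :=
          mul_le_mul_of_nonneg_left h2 (by positivity)
        have h6 : ε * (ε * r) ≤ (1/2) * (ε * r) :=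
          mul_le_mul_of_nonneg_right hcase.le (by positivity)
        nlinarith
  · -- trivial case ε ≥ 1/2
    push_neg at hcase
    constructor
    · apply aux_dBall_le hAr (by positivity)
      · rintro z ⟨hzP, hzB⟩
        have h1 : Metric.infDist z ((fun w => x + w) '' (W : Set H)) ≤ dist z x :=
          Metric.infDist_le_dist_of_mem hxPW
        have h2 : dist z x ≤ A * r := Metric.mem_closedBall.mp hzB
        nlinarith
      · rintro z ⟨hzP, hzB⟩
        have h1 : Metric.infDist z ((fun w => x + w) '' (V : Set H)) ≤ dist z x :=
          Metric.infDist_le_dist_of_mem hxPV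
        have h2 : dist z x ≤ A * r := Metric.mem_closedBall.mp hzB
        nlinarith
    · have hgoal : 4 * ε * (1 + 1/A) * (A * r) = 4 * ε * (A * r) + 4 * ε * r := by
        field_simp
      apply aux_dBall_le hAr (by positivity)
      · rintro z ⟨hzP, hzB⟩
        have h1 : Metric.infDist z ((fun w => y + w) '' (W : Set H))
            ≤ Metric.infDist x ((fun w => y + w) '' (W : Set H)) + dist z x :=
          Metric.infDist_le_infDist_add_dist
        have h2 : Metric.infDist x ((fun w => y + w) '' (W : Set H)) ≤ ε * r := by
          rw [aux_infDist_translate]; exact h_u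
        have h3 : dist z x ≤ A * r := Metric.mem_closedBall.mp hzB
        rw [hgoal]
        nlinarith
      · rintro z ⟨hzP, hzB⟩
        have h1 : Metric.infDist z ((fun w => x + w) '' (V : Set H)) ≤ dist z x :=
          Metric.infDist_le_dist_of_mem hxPV
        have h2 : dist z x ≤ A * r := Metric.mem_closedBall.mp hzB
        rw [hgoal]
        nlinarith
end
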